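/- Let Θ be a DTAS which self-assembles Q using at most m_b black tile types and m_g gray tile types. Then the tile assignment of any complete supertile in Q_Θ, together with its output glues, is fully determined by the tile type in its position A (equivalently, by the supertile's south and west inputs); consequently, two complete supertiles in Q_Θ are distinct if and only if the tile types in their positions A are distinct, which holds if and only if their inputs differ. -/
import Mathlib


/-- A colored Wang tile with a color and four glues (north, east, south, west). -/
structure Tile (C G : Type) where
  color : C
  north : G
  east : G
  south : G
  west : G
deriving DecidableEq

/-- A rectilinear tile assembly system: a finite set of tile types together with
an L-shaped seed, given by its north glues (bottom arm) and east glues (left arm). -/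
structure RTAS (C G : Type) where
  tiles : Finset (Tile C G)
  seedN : ℕ → G
  seedE : ℕ → G

/-- A tile assignment for the `M × N` rectangle spanned by the seed:
every tile belongs to the system, west/south glues match the east/north glues of the
west/south neighbours, and the seed glues on the boundary. -/
def IsAssignment {C G : Type} (T : RTAS C G) (M N : ℕ) (f : ℕ → ℕ → Tile C G) : Prop :=
  (∀ x < M, ∀ y < N, f x y ∈ T.tiles) ∧
  (∀ y < N, (f 0 y).west = T.seedE y) ∧
  (∀ x < M, (f x 0).south = T.seedN x) ∧
  (∀ x, x + 1 < M → ∀ y < N, (f (x + 1) y).west = (f x y).east) ∧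
  (∀ x < M, ∀ y, y + 1 < N → (f x (y + 1)).south = (f x y).north)

/-- `T` self-assembles the `M × N` pattern `P` if some tile assignment realizes `P`. -/
def SelfAssembles {C G : Type} (T : RTAS C G) (M N : ℕ) (P : ℕ → ℕ → C) : Prop :=
  ∃ f, IsAssignment T M N f ∧ ∀ x < M, ∀ y < N, (f x y).color = P x y

/-- A directed RTAS: distinct tile types differ in their south or west glue. -/
def DirectedTAS {C G : Type} (T : RTAS C G) : Prop :=
  ∀ t₁ ∈ T.tiles, ∀ t₂ ∈ T.tiles, t₁ ≠ t₂ → t₁.south ≠ t₂.south ∨ t₁.west ≠ t₂.west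

/-- The set of colors occurring in the `M × N` pattern `P`. -/
def colorsOf {C : Type} [DecidableEq C] (M N : ℕ) (P : ℕ → ℕ → C) : Finset C :=
  (Finset.range M ×ˢ Finset.range N).image fun q => P q.1 q.2

/-- The named colors used in the subpatterns of the pattern `P_F` of the paper.
`uniq n` are the "unique" filler colors. -/
inductive PColor where
  | orC | plus | minus
  | Z1 | Z2 | Z3 | Z4
  | aC | bW | bD | cW | cD | dC
  | arrW (w : Fin 2)
  | arrD (w : Fin 2)
  | upW (s : Fin 2)
  | upD (s : Fin 2)
  | gate (i : Fin 4)
  | X (i : Fin 8)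
  | Y (i : Fin 8)
  | varW (v : ℕ)
  | negW (v : ℕ)
  | varAux (v : ℕ)
  | varMod (v : ℕ)
  | varModd (v : ℕ)
  | uniq (n : ℕ)
deriving DecidableEq

/-- The `16 × 2` subpattern `p`: eight `2 × 2` blocks, block `i` having colors
`Xᵢ` (bottom-left), `OR` (bottom-right, top-left) and `Yᵢ` (top-right). -/
def pPat : ℕ → ℕ → PColor := fun x y =>
  if y = 0 then
    if x % 2 = 0 then PColor.X ⟨x / 2 % 8, Nat.mod_lt _ (by norm_num)⟩ else PColor.orC
  else
    if x % 2 = 0 then PColor.orC else PColor.Y ⟨x / 2 % 8, Nat.mod_lt _ (by norm_num)⟩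

/-- The `4 × 4` subpatterns `q₁, …, q₄` (index `idx = 0, …, 3`), with west input
`w = idx / 2` and south input `s = idx % 2` feeding an `OR`-colored position. -/
def qPat (idx : Fin 4) : ℕ → ℕ → PColor := fun x y =>
  let wv : Fin 2 := ⟨idx.val / 2, by have := idx.isLt; omega⟩
  let sv : Fin 2 := ⟨idx.val % 2, Nat.mod_lt _ (by norm_num)⟩
  match x, y with
  | 0, 0 => PColor.Z1
  | 1, 0 => PColor.Z2
  | 2, 0 => PColor.upD sv
  | 3, 0 => PColor.bD
  | 0, 1 => PColor.Z3
  | 1, 1 => PColor.aC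
  | 2, 1 => PColor.upW sv
  | 3, 1 => PColor.bW
  | 0, 2 => PColor.arrD wv
  | 1, 2 => PColor.arrW wv
  | 2, 2 => PColor.orC
  | 3, 2 => if idx.val = 0 then PColor.minus else PColor.plus
  | 0, 3 => PColor.cD
  | 1, 3 => PColor.cW
  | 2, 3 => PColor.gate idx
  | _, _ => PColor.dC

/-- The `6 × 3` subpattern `q₅`: bottom row `a ↑₀ ↑₁ ↑₀ ↑₁ b`, middle row
`→₀ OR OR OR OR +`, top row `c A B C D d`. -/
def q5Pat : ℕ → ℕ → PColor := fun x y =>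
  match y, x with
  | 0, 0 => PColor.aC
  | 0, 1 => PColor.upW 0
  | 0, 2 => PColor.upW 1
  | 0, 3 => PColor.upW 0
  | 0, 4 => PColor.upW 1
  | 0, _ => PColor.bW
  | 1, 0 => PColor.arrW 0
  | 1, 5 => PColor.plus
  | 1, _ => PColor.orC
  | 2, 0 => PColor.cW
  | 2, 1 => PColor.gate 0
  | 2, 2 => PColor.gate 1
  | 2, 3 => PColor.gate 2
  | 2, 4 => PColor.gate 3
  | _, _ => PColor.dC

/-- A literal: a variable index together with its sign (`true` = positive). -/
abbrev Lit := ℕ × Bool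

/-- A clause with three literals. -/
abbrev Clause3 := Lit × Lit × Lit

/-- A boolean formula in 3-CNF over the variables `0, …, numVars - 1`. -/
structure CNF3 where
  numVars : ℕ
  clauses : List Clause3
  wf : ∀ cl ∈ clauses, cl.1.1 < numVars ∧ cl.2.1.1 < numVars ∧ cl.2.2.1 < numVars

/-- Value of a literal under a variable assignment. -/
def litVal (f : ℕ → Bool) (l : Lit) : Bool := if l.2 then f l.1 else ! f l.1

/-- A 3-CNF formula is satisfiable if some assignment makes every clause true. -/
def CNF3.Satisfiable (F : CNF3) : Prop :=
  ∃ f : ℕ → Bool, ∀ cl ∈ F.clauses,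
    (litVal f cl.1 || litVal f cl.2.1 || litVal f cl.2.2) = true

/-- The `2 × 2` subpattern `r₁(v)`. -/
def r1Pat (v : ℕ) : ℕ → ℕ → PColor := fun x y =>
  match x, y with
  | 0, 0 => PColor.Z4
  | 1, 0 => PColor.varW v
  | 0, 1 => PColor.varAux v
  | _, _ => PColor.varMod v

/-- The `2 × 2` subpattern `r₂(v)`. -/
def r2Pat (v : ℕ) : ℕ → ℕ → PColor := fun x y =>
  match x, y with
  | 0, 0 => PColor.Z4
  | 1, 0 => PColor.negW v
  | 0, 1 => PColor.varAux v
  | _, _ => PColor.varModd v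

/-- The `4 × 2` subpattern `r₃(v)`: bottom row `a v ¬v b`, top row `→₀ OR OR +`. -/
def r3Pat (v : ℕ) : ℕ → ℕ → PColor := fun x y =>
  match y, x with
  | 0, 0 => PColor.aC
  | 0, 1 => PColor.varW v
  | 0, 2 => PColor.negW v
  | 0, _ => PColor.bW
  | 1, 0 => PColor.arrW 0
  | 1, 3 => PColor.plus
  | _, _ => PColor.orC

/-- The color of a literal. -/
def litColor (l : Lit) : PColor := if l.2 then PColor.varW l.1 else PColor.negW l.1

/-- The `5 × 2` subpattern `s(C)` for a clause `C = (c₁ ∨ c₂ ∨ c₃)`: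
bottom row `a c₁ c₂ c₃ b`, top row `→₀ OR OR OR +`. -/
def sPat (cl : Clause3) : ℕ → ℕ → PColor := fun x y =>
  match y, x with
  | 0, 0 => PColor.aC
  | 0, 1 => litColor cl.1
  | 0, 2 => litColor cl.2.1
  | 0, 3 => litColor cl.2.2
  | 0, _ => PColor.bW
  | 1, 0 => PColor.arrW 0
  | 1, 4 => PColor.plus
  | _, _ => PColor.orC

/-- A rectangular block: width, height and contents. -/
abbrev PBlock := ℕ × ℕ × (ℕ → ℕ → PColor)

/-- The list of subpatterns of `P_F`: `p`, `q₁, …, q₅`, then `r₁(v), r₂(v), r₃(v)`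
for every variable `v`, then `s(C)` for every clause `C`. -/
def blocksOf (F : CNF3) : List PBlock :=
  [(16, 2, pPat), (4, 4, qPat 0), (4, 4, qPat 1), (4, 4, qPat 2), (4, 4, qPat 3),
    (6, 3, q5Pat)]
    ++ (List.range F.numVars).flatMap
        (fun v => [(2, 2, r1Pat v), (2, 2, r2Pat v), (4, 2, r3Pat v)])
    ++ F.clauses.map (fun cl => (5, 2, sPat cl))

/-- Place the blocks side by side (starting at column `x0`, occupying rows `1, …, h`),
with one column of unique colors before each block and after the last one; all the
remaining positions carry unique colors (`uniq` of the position code). -/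
def place : List PBlock → ℕ → ℕ → ℕ → PColor
  | [], _, x, y => PColor.uniq (Nat.pair x y)
  | b :: bs, x0, x, y =>
      if x0 ≤ x ∧ x < x0 + b.1 ∧ 1 ≤ y ∧ y < 1 + b.2.1 then
        b.2.2 (x - x0) (y - 1)
      else if x < x0 + b.1 + 1 then PColor.uniq (Nat.pair x y)
      else place bs (x0 + b.1 + 1) x y

/-- The pattern `P_F` of the paper, of height `6` and width `45 + 11·|V| + 6·ℓ`. -/
def patF (F : CNF3) : ℕ → ℕ → PColor := fun x y => place (blocksOf F) 1 x y

/-- The width of the pattern `P_F`. -/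
def widthF (F : CNF3) : ℕ := 45 + 11 * F.numVars + 6 * F.clauses.length

/-- The three colors black, white, gray. -/
inductive BWG where
  | black | white | gray
deriving DecidableEq

/-- The number of tile types of a given color in a tile assembly system. -/
def countColor {C G : Type} [DecidableEq C] (T : RTAS C G) (c : C) : ℕ :=
  (T.tiles.filter (fun t => t.color = c)).card

/-- The `ℓ × ℓ` supertile portraying the color `c ∈ [k]` (with `ℓ = 5k + 8`):
white bottom row and left column; gray top row and right column except for one
white position at index `c + 1` of each (the color counters); black interior. -/
def superPat (ℓ c : ℕ) : ℕ → ℕ → BWG := fun x y =>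
  if y = 0 then BWG.white
  else if x = 0 then BWG.white
  else if y = ℓ - 1 then (if x = c + 1 then BWG.white else BWG.gray)
  else if x = ℓ - 1 then (if y = c + 1 then BWG.white else BWG.gray)
  else BWG.black

/-- The black/white/gray pattern `Q` built from the `w × h` pattern `P` with colors
in `[k]`: each position `(x, y)` of `P` is replaced by the `ℓ × ℓ` supertile
portraying `P x y` (supertiles in the bottom row/left column of `P` are
incomplete, lacking their white bottom row/left column), and three gadget rows
and three gadget columns are appended at the top and at the right. -/
def QPat (k w h : ℕ) (P : ℕ → ℕ → ℕ) : ℕ → ℕ → BWG := fun X Y =>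
  let ℓ := 5 * k + 8
  if X + 1 < ℓ * w ∧ Y + 1 < ℓ * h then
    superPat ℓ (P ((X + 1) / ℓ) ((Y + 1) / ℓ)) ((X + 1) % ℓ) ((Y + 1) % ℓ)
  else if X + 1 < ℓ * w then
    -- the three gadget rows
    if Y = ℓ * h then (if X = k then BWG.white else BWG.gray)
    else (if (X + 1) % ℓ = ℓ - 1 then BWG.gray else BWG.black)
  else if Y + 1 < ℓ * h then
    -- the three gadget columns
    if X = ℓ * w then (if Y = k then BWG.white else BWG.gray)
    else (if (Y + 1) % ℓ = ℓ - 1 then BWG.gray else BWG.black)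
  else
    -- the top-right 3 × 3 corner
    if X = ℓ * w ∨ Y = ℓ * h then BWG.gray else BWG.black

/-- Width of the pattern `Q`. -/
def QW (k w : ℕ) : ℕ := (5 * k + 8) * w + 2

/-- Height of the pattern `Q`. -/
def QH (k h : ℕ) : ℕ := (5 * k + 8) * h + 2

/-- `(P, m) ∈ ℐ` (with `m = k + 3`): `P` is, up to an identification `ρ` of its
colors with `[k] = {1, …, k}`, the pattern `P_F` of a 3-CNF formula `F`. -/
def InI (k w h : ℕ) (P : ℕ → ℕ → ℕ) : Prop :=
  ∃ (F : CNF3) (ρ : PColor → ℕ),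
    w = widthF F ∧ h = 6 ∧
    Set.BijOn ρ (↑(colorsOf (widthF F) 6 (patF F))) (Set.Icc 1 k) ∧
    ∀ x < w, ∀ y < h, P x y = ρ (patF F x y)

/-- The tile assignment of the supertile at `(x, y)` of the supertile grid,
as a partial function on inner coordinates: inner position `(i, j)` corresponds
to the global position `(x·ℓ + i - 1, y·ℓ + j - 1)`; positions with `i = 0`
(resp. `j = 0`) exist only if `x ≥ 1` (resp. `y ≥ 1`). -/
def superOpt {G : Type} (ℓ : ℕ) (f : ℕ → ℕ → Tile BWG G) (x y : ℕ) :
    ℕ → ℕ → Option (Tile BWG G) := fun i j =>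
  if i < ℓ ∧ j < ℓ ∧ (1 ≤ x ∨ 1 ≤ i) ∧ (1 ≤ y ∨ 1 ≤ j) then
    some (f (x * ℓ + i - 1) (y * ℓ + j - 1))
  else none

/-- `s(N)`: the north output of a supertile, i.e. the north glue of its tile in
position `C₂` (inner position `(0, ℓ - 1)`); defined for `x ≥ 1`. -/
def stN {G : Type} (ℓ : ℕ) (f : ℕ → ℕ → Tile BWG G) (x y : ℕ) : G :=
  (f (x * ℓ - 1) (y * ℓ + ℓ - 2)).north

/-- `s(E)`: the east output of a supertile, i.e. the east glue of its tile in
position `C₁` (inner position `(ℓ - 1, 0)`); defined for `y ≥ 1`. -/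
def stE {G : Type} (ℓ : ℕ) (f : ℕ → ℕ → Tile BWG G) (x y : ℕ) : G :=
  (f (x * ℓ + ℓ - 2) (y * ℓ - 1)).east

/-- `s(S)`: the south input of a supertile, i.e. the south glue of its tile in
position `A` (inner position `(0, 0)`); defined for `x, y ≥ 1`. -/
def stS {G : Type} (ℓ : ℕ) (f : ℕ → ℕ → Tile BWG G) (x y : ℕ) : G :=
  (f (x * ℓ - 1) (y * ℓ - 1)).south

/-- `s(W)`: the west input of a supertile, i.e. the west glue of its tile in
position `A` (inner position `(0, 0)`); defined for `x, y ≥ 1`. -/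
def stW {G : Type} (ℓ : ℕ) (f : ℕ → ℕ → Tile BWG G) (x y : ℕ) : G :=
  (f (x * ℓ - 1) (y * ℓ - 1)).west

section ControlDev

private lemma ctd_mul_bound {L x w a : ℕ} (hx : x < w) (ha : a < L) :
    x * L + a + 1 ≤ L * w := by
  have h1 : (x + 1) * L = x * L + L := by ring
  have h2 : (x + 1) * L ≤ w * L := Nat.mul_le_mul_right L hx
  have h3 : w * L = L * w := Nat.mul_comm w L
  omega

private lemma ctd_div {L x r : ℕ} (hL : 0 < L) (hr : r < L) : (x * L + r) / L = x := by
  rw [Nat.mul_comm x L, Nat.mul_add_div hL, Nat.div_eq_of_lt hr]; omega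

private lemma ctd_mod {L x r : ℕ} (hr : r < L) : (x * L + r) % L = r := by
  rw [Nat.mul_comm x L, Nat.mul_add_mod, Nat.mod_eq_of_lt hr]

private lemma ctd_sblack {k c a b : ℕ} (hc1 : 1 ≤ c) (hc2 : c ≤ k)
    (ha : a ≤ 5*k+5) (hb : b ≤ 5*k+5) :
    superPat (5*k+8) c (a+1) (b+1) = BWG.black := by
  unfold superPat
  split_ifs <;> first | rfl | omega | contradiction

private lemma ctd_srow {k c a : ℕ} (hc1 : 1 ≤ c) (hc2 : c ≤ k) (ha : a ≤ 5*k+6) :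
    superPat (5*k+8) c (a+1) (5*k+6+1) = (if a = c then BWG.white else BWG.gray) := by
  unfold superPat
  split_ifs <;> first | rfl | omega | contradiction

private lemma ctd_scol {k c b : ℕ} (hc1 : 1 ≤ c) (hc2 : c ≤ k) (hb : b ≤ 5*k+5) :
    superPat (5*k+8) c (5*k+6+1) (b+1) = (if b = c then BWG.white else BWG.gray) := by
  unfold superPat
  split_ifs <;> first | rfl | omega | contradiction

/-- A bundle of all standing hypotheses. -/
structure Ctx (G : Type) [DecidableEq G] : Type where
  k : ℕ
  w : ℕ
  h : ℕ
  P : ℕ → ℕ → ℕ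
  T : RTAS BWG G
  f : ℕ → ℕ → Tile BWG G
  hw : 1 ≤ w
  hh : 1 ≤ h
  hP : ∀ x < w, ∀ y < h, 1 ≤ P x y ∧ P x y ≤ k
  hD : DirectedTAS T
  hb : countColor T BWG.black ≤ 1
  hg : countColor T BWG.gray ≤ 2 * k + 3
  hf : IsAssignment T (QW k w) (QH k h) f
  hcol : ∀ X < QW k w, ∀ Y < QH k h, (f X Y).color = QPat k w h P X Y

namespace Ctx

variable {G : Type} [DecidableEq G] (C : Ctx G)

lemma hM : QW C.k C.w = (5 * C.k + 8) * C.w + 2 := rfl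
lemma hN : QH C.k C.h = (5 * C.k + 8) * C.h + 2 := rfl

lemma hk : 1 ≤ C.k := by
  have := C.hP 0 C.hw 0 C.hh; omega

lemma mem {X Y : ℕ} (hX : X < QW C.k C.w) (hY : Y < QH C.k C.h) :
    C.f X Y ∈ C.T.tiles := C.hf.1 X hX Y hY

lemma wlink {X Y : ℕ} (hX : X + 1 < QW C.k C.w) (hY : Y < QH C.k C.h) :
    (C.f (X + 1) Y).west = (C.f X Y).east := C.hf.2.2.2.1 X hX Y hY

lemma slink {X Y : ℕ} (hX : X < QW C.k C.w) (hY : Y + 1 < QH C.k C.h) :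
    (C.f X (Y + 1)).south = (C.f X Y).north := C.hf.2.2.2.2 X hX Y hY

lemma uniq {t₁ t₂ : Tile BWG G} (h₁ : t₁ ∈ C.T.tiles) (h₂ : t₂ ∈ C.T.tiles)
    (hs : t₁.south = t₂.south) (hww : t₁.west = t₂.west) : t₁ = t₂ := by
  by_contra hne
  rcases C.hD t₁ h₁ t₂ h₂ hne with h | h
  · exact h hs
  · exact h hww

lemma col {X Y : ℕ} (hX : X < QW C.k C.w) (hY : Y < QH C.k C.h) :
    (C.f X Y).color = QPat C.k C.w C.h C.P X Y := C.hcol X hX Y hY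

lemma inM {x a : ℕ} (hx : x < C.w) (ha : a ≤ 5 * C.k + 7) :
    x * (5 * C.k + 8) + a < QW C.k C.w := by
  have := ctd_mul_bound (L := 5 * C.k + 8) hx (by omega : a < 5 * C.k + 8)
  rw [hM]; omega

lemma inN {y b : ℕ} (hy : y < C.h) (hb : b ≤ 5 * C.k + 7) :
    y * (5 * C.k + 8) + b < QH C.k C.h := by
  have := ctd_mul_bound (L := 5 * C.k + 8) hy (by omega : b < 5 * C.k + 8)
  rw [hN]; omega

/-- supertile color evaluation -/
lemma qsuper {x y a b : ℕ} (hx : x < C.w) (hy : y < C.h)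
    (ha : a ≤ 5 * C.k + 6) (hb : b ≤ 5 * C.k + 6) :
    (C.f (x * (5 * C.k + 8) + a) (y * (5 * C.k + 8) + b)).color
      = superPat (5 * C.k + 8) (C.P x y) (a + 1) (b + 1) := by
  rw [C.col (C.inM hx (by omega)) (C.inN hy (by omega))]
  unfold QPat
  have hL : 0 < 5 * C.k + 8 := by omega
  have e1 : x * (5 * C.k + 8) + a + 1 = x * (5 * C.k + 8) + (a + 1) := by omega
  have e2 : y * (5 * C.k + 8) + b + 1 = y * (5 * C.k + 8) + (b + 1) := by omega
  have hxb : x * (5 * C.k + 8) + (a + 1) + 1 ≤ (5 * C.k + 8) * C.w :=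
    ctd_mul_bound hx (by omega)
  have hyb : y * (5 * C.k + 8) + (b + 1) + 1 ≤ (5 * C.k + 8) * C.h :=
    ctd_mul_bound hy (by omega)
  have hda : (x * (5 * C.k + 8) + (a + 1)) / (5 * C.k + 8) = x := ctd_div hL (by omega)
  have hma : (x * (5 * C.k + 8) + (a + 1)) % (5 * C.k + 8) = a + 1 := ctd_mod (by omega)
  have hdb : (y * (5 * C.k + 8) + (b + 1)) / (5 * C.k + 8) = y := ctd_div hL (by omega)
  have hmb : (y * (5 * C.k + 8) + (b + 1)) % (5 * C.k + 8) = b + 1 := ctd_mod (by omega)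
  rw [e1, e2, if_pos ⟨by omega, by omega⟩, hda, hma, hdb, hmb]

lemma colBlack {x y a b : ℕ} (hx : x < C.w) (hy : y < C.h)
    (ha : a ≤ 5 * C.k + 5) (hb : b ≤ 5 * C.k + 5) :
    (C.f (x * (5 * C.k + 8) + a) (y * (5 * C.k + 8) + b)).color = BWG.black := by
  have hc := C.hP x hx y hy
  rw [C.qsuper hx hy (by omega) (by omega)]
  exact ctd_sblack hc.1 hc.2 ha hb

lemma colRow {x y a : ℕ} (hx : x < C.w) (hy : y < C.h) (ha : a ≤ 5 * C.k + 6) :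
    (C.f (x * (5 * C.k + 8) + a) (y * (5 * C.k + 8) + (5 * C.k + 6))).color
      = (if a = C.P x y then BWG.white else BWG.gray) := by
  have hc := C.hP x hx y hy
  rw [C.qsuper hx hy (by omega) (by omega)]
  exact ctd_srow hc.1 hc.2 ha

lemma colCol {x y b : ℕ} (hx : x < C.w) (hy : y < C.h) (hb : b ≤ 5 * C.k + 5) :
    (C.f (x * (5 * C.k + 8) + (5 * C.k + 6)) (y * (5 * C.k + 8) + b)).color
      = (if b = C.P x y then BWG.white else BWG.gray) := by
  have hc := C.hP x hx y hy
  rw [C.qsuper hx hy (by omega) (by omega)]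
  exact ctd_scol hc.1 hc.2 hb

lemma hLw : 5 * C.k + 8 ≤ (5 * C.k + 8) * C.w := Nat.le_mul_of_pos_right _ C.hw
lemma hLh : 5 * C.k + 8 ≤ (5 * C.k + 8) * C.h := Nat.le_mul_of_pos_right _ C.hh

/-- the unique black tile -/
def bT : Tile BWG G := C.f 1 1

lemma bColor : C.bT.color = BWG.black := by
  have h := C.colBlack (x := 0) (y := 0) (a := 1) (b := 1) C.hw C.hh (by omega) (by omega)
  simpa [bT] using h

lemma blackEq {X Y : ℕ} (hX : X < QW C.k C.w) (hY : Y < QH C.k C.h)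
    (hc : (C.f X Y).color = BWG.black) : C.f X Y = C.bT := by
  have hb' := C.hb
  unfold countColor at hb'
  have hmem₁ : C.f X Y ∈ C.T.tiles.filter (fun t => t.color = BWG.black) :=
    Finset.mem_filter.2 ⟨C.mem hX hY, hc⟩
  have h1M : (1 : ℕ) < QW C.k C.w := by have := C.hLw; rw [hM]; omega
  have h1N : (1 : ℕ) < QH C.k C.h := by have := C.hLh; rw [hN]; omega
  have hmem₂ : C.bT ∈ C.T.tiles.filter (fun t => t.color = BWG.black) :=
    Finset.mem_filter.2 ⟨C.mem h1M h1N, C.bColor⟩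
  exact Finset.card_le_one.mp hb' _ hmem₁ _ hmem₂

def nb : G := C.bT.north
def eb : G := C.bT.east

lemma bSouth : C.bT.south = C.nb := by
  have h1M : (1 : ℕ) < QW C.k C.w := by have := C.hLw; rw [hM]; omega
  have h2N : (1 : ℕ) + 1 < QH C.k C.h := by have := C.hLh; rw [hN]; omega
  have hs := C.slink (X := 1) (Y := 1) h1M h2N
  have hcb : (C.f 1 2).color = BWG.black := by
    have h := C.colBlack (x := 0) (y := 0) (a := 1) (b := 2) C.hw C.hh (by omega) (by omega)
    simpa using h
  have := C.blackEq h1M (by omega) hcb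
  rw [show (1:ℕ)+1 = 2 from rfl, this] at hs
  exact hs

lemma bWest : C.bT.west = C.eb := by
  have h2M : (1 : ℕ) + 1 < QW C.k C.w := by have := C.hLw; rw [hM]; omega
  have h1N : (1 : ℕ) < QH C.k C.h := by have := C.hLh; rw [hN]; omega
  have hs := C.wlink (X := 1) (Y := 1) h2M h1N
  have hcb : (C.f 2 1).color = BWG.black := by
    have h := C.colBlack (x := 0) (y := 0) (a := 2) (b := 1) C.hw C.hh (by omega) (by omega)
    simpa using h
  have := C.blackEq (by omega) h1N hcb
  rw [show (1:ℕ)+1 = 2 from rfl, this] at hs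
  exact hs

/-! gadget rows / columns color lemmas -/

lemma colGadRow {X : ℕ} (hX : X + 2 ≤ (5 * C.k + 8) * C.w) :
    (C.f X ((5 * C.k + 8) * C.h)).color = (if X = C.k then BWG.white else BWG.gray) := by
  rw [C.col (by rw [hM]; omega) (by rw [hN]; omega)]
  unfold QPat
  rw [if_neg (by omega), if_pos (by omega), if_pos rfl]

lemma colGadRowBelow {X Y : ℕ} (hX : X ≤ 5 * C.k + 5) (hY : Y + 1 = (5 * C.k + 8) * C.h) :
    (C.f X Y).color = BWG.black := by
  have hLw := C.hLw; have hLh := C.hLh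
  rw [C.col (by rw [hM]; omega) (by rw [hN]; omega)]
  unfold QPat
  rw [if_neg (by omega), if_pos (by omega), if_neg (by omega),
    if_neg (by rw [Nat.mod_eq_of_lt (by omega)]; omega)]

lemma colGadRowAbove {X : ℕ} (hX : X ≤ 5 * C.k + 5) :
    (C.f X ((5 * C.k + 8) * C.h + 1)).color = BWG.black := by
  have hLw := C.hLw; have hLh := C.hLh
  rw [C.col (by rw [hM]; omega) (by rw [hN]; omega)]
  unfold QPat
  rw [if_neg (by omega), if_pos (by omega), if_neg (by omega),
    if_neg (by rw [Nat.mod_eq_of_lt (by omega)]; omega)]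

lemma colGadCol {Y : ℕ} (hY : Y + 2 ≤ (5 * C.k + 8) * C.h) :
    (C.f ((5 * C.k + 8) * C.w) Y).color = (if Y = C.k then BWG.white else BWG.gray) := by
  rw [C.col (by rw [hM]; omega) (by rw [hN]; omega)]
  unfold QPat
  rw [if_neg (by omega), if_neg (by omega), if_pos (by omega), if_pos rfl]

lemma colGadColLeft {X Y : ℕ} (hX : X + 1 = (5 * C.k + 8) * C.w) (hY : Y ≤ 5 * C.k + 5) :
    (C.f X Y).color = BWG.black := by
  have hLw := C.hLw; have hLh := C.hLh
  rw [C.col (by rw [hM]; omega) (by rw [hN]; omega)]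
  unfold QPat
  rw [if_neg (by omega), if_neg (by omega), if_pos (by omega), if_neg (by omega),
    if_neg (by rw [Nat.mod_eq_of_lt (by omega)]; omega)]

lemma colGadColRight {Y : ℕ} (hY : Y ≤ 5 * C.k + 5) :
    (C.f ((5 * C.k + 8) * C.w + 1) Y).color = BWG.black := by
  have hLw := C.hLw; have hLh := C.hLh
  rw [C.col (by rw [hM]; omega) (by rw [hN]; omega)]
  unfold QPat
  rw [if_neg (by omega), if_neg (by omega), if_pos (by omega), if_neg (by omega),
    if_neg (by rw [Nat.mod_eq_of_lt (by omega)]; omega)]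

/-! the two gadget counter sequences -/

def gr (j : ℕ) : Tile BWG G := C.f j ((5 * C.k + 8) * C.h)
def gc (j : ℕ) : Tile BWG G := C.f ((5 * C.k + 8) * C.w) j

lemma grMem {j : ℕ} (hj : j ≤ 5 * C.k + 5) : C.gr j ∈ C.T.tiles := by
  have := C.hLw; have := C.hLh
  exact C.mem (by rw [hM]; omega) (by rw [hN]; omega)

lemma gcMem {j : ℕ} (hj : j ≤ 5 * C.k + 5) : C.gc j ∈ C.T.tiles := by
  have := C.hLw; have := C.hLh
  exact C.mem (by rw [hM]; omega) (by rw [hN]; omega)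

lemma grColor {j : ℕ} (hj : j ≤ 5 * C.k + 5) :
    (C.gr j).color = (if j = C.k then BWG.white else BWG.gray) := by
  have := C.hLw
  exact C.colGadRow (by omega)

lemma gcColor {j : ℕ} (hj : j ≤ 5 * C.k + 5) :
    (C.gc j).color = (if j = C.k then BWG.white else BWG.gray) := by
  have := C.hLh
  exact C.colGadCol (by omega)

lemma grSouth {j : ℕ} (hj : j ≤ 5 * C.k + 5) : (C.gr j).south = C.nb := by
  have hLw := C.hLw; have hLh := C.hLh
  obtain ⟨Y₀, hY₀⟩ : ∃ Y₀, Y₀ + 1 = (5 * C.k + 8) * C.h := ⟨(5 * C.k + 8) * C.h - 1, by omega⟩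
  have hs := C.slink (X := j) (Y := Y₀) (by rw [hM]; omega) (by rw [hN]; omega)
  rw [hY₀] at hs
  have hblack := C.blackEq (X := j) (Y := Y₀) (by rw [hM]; omega) (by rw [hN]; omega)
    (C.colGadRowBelow hj hY₀)
  rw [hblack] at hs
  exact hs

lemma grNorth {j : ℕ} (hj : j ≤ 5 * C.k + 5) : (C.gr j).north = C.nb := by
  have hLw := C.hLw; have hLh := C.hLh
  have hs := C.slink (X := j) (Y := (5 * C.k + 8) * C.h) (by rw [hM]; omega) (by rw [hN]; omega)
  have hblack := C.blackEq (X := j) (Y := (5 * C.k + 8) * C.h + 1) (by rw [hM]; omega)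
    (by rw [hN]; omega) (C.colGadRowAbove hj)
  rw [hblack, C.bSouth] at hs
  exact hs.symm

lemma grChain {j : ℕ} (hj : j + 1 ≤ 5 * C.k + 5) : (C.gr (j + 1)).west = (C.gr j).east := by
  have hLw := C.hLw; have hLh := C.hLh
  exact C.wlink (by rw [hM]; omega) (by rw [hN]; omega)

lemma gcWest {j : ℕ} (hj : j ≤ 5 * C.k + 5) : (C.gc j).west = C.eb := by
  have hLw := C.hLw; have hLh := C.hLh
  obtain ⟨X₀, hX₀⟩ : ∃ X₀, X₀ + 1 = (5 * C.k + 8) * C.w := ⟨(5 * C.k + 8) * C.w - 1, by omega⟩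
  have hs := C.wlink (X := X₀) (Y := j) (by rw [hM]; omega) (by rw [hN]; omega)
  rw [hX₀] at hs
  have hblack := C.blackEq (X := X₀) (Y := j) (by rw [hM]; omega) (by rw [hN]; omega)
    (C.colGadColLeft hX₀ hj)
  rw [hblack] at hs
  exact hs

lemma gcEast {j : ℕ} (hj : j ≤ 5 * C.k + 5) : (C.gc j).east = C.eb := by
  have hLw := C.hLw; have hLh := C.hLh
  have hs := C.wlink (X := (5 * C.k + 8) * C.w) (Y := j) (by rw [hM]; omega) (by rw [hN]; omega)
  have hblack := C.blackEq (X := (5 * C.k + 8) * C.w + 1) (Y := j) (by rw [hM]; omega)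
    (by rw [hN]; omega) (C.colGadColRight hj)
  rw [hblack, C.bWest] at hs
  exact hs.symm

lemma gcChain {j : ℕ} (hj : j + 1 ≤ 5 * C.k + 5) : (C.gc (j + 1)).south = (C.gc j).north := by
  have hLw := C.hLw; have hLh := C.hLh
  exact C.slink (by rw [hM]; omega) (by rw [hN]; omega)

lemma bMem : C.bT ∈ C.T.tiles := by
  have := C.hLw; have := C.hLh
  exact C.mem (by rw [hM]; omega) (by rw [hN]; omega)

/-- horizontal determinism lift -/
lemma chainLift (F₁ F₂ : ℕ → Tile BWG G) (n : ℕ)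
    (h₁ : ∀ d < n, F₁ (d+1) ∈ C.T.tiles ∧ (F₁ (d+1)).south = C.nb ∧
      (F₁ (d+1)).west = (F₁ d).east)
    (h₂ : ∀ d < n, F₂ (d+1) ∈ C.T.tiles ∧ (F₂ (d+1)).south = C.nb ∧
      (F₂ (d+1)).west = (F₂ d).east)
    (h0 : F₁ 0 = F₂ 0) : ∀ d ≤ n, F₁ d = F₂ d := by
  intro d
  induction d with
  | zero => intro _; exact h0
  | succ d ih =>
      intro hd
      have hprev := ih (by omega)
      obtain ⟨m1, s1, w1⟩ := h₁ d (by omega)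
      obtain ⟨m2, s2, w2⟩ := h₂ d (by omega)
      exact C.uniq m1 m2 (by rw [s1, s2]) (by rw [w1, w2, hprev])

/-- vertical determinism lift -/
lemma chainLiftV (F₁ F₂ : ℕ → Tile BWG G) (n : ℕ)
    (h₁ : ∀ d < n, F₁ (d+1) ∈ C.T.tiles ∧ (F₁ (d+1)).west = C.eb ∧
      (F₁ (d+1)).south = (F₁ d).north)
    (h₂ : ∀ d < n, F₂ (d+1) ∈ C.T.tiles ∧ (F₂ (d+1)).west = C.eb ∧
      (F₂ (d+1)).south = (F₂ d).north)
    (h0 : F₁ 0 = F₂ 0) : ∀ d ≤ n, F₁ d = F₂ d := by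
  intro d
  induction d with
  | zero => intro _; exact h0
  | succ d ih =>
      intro hd
      have hprev := ih (by omega)
      obtain ⟨m1, w1, s1⟩ := h₁ d (by omega)
      obtain ⟨m2, w2, s2⟩ := h₂ d (by omega)
      exact C.uniq m1 m2 (by rw [s1, s2, hprev]) (by rw [w1, w2])

lemma grShift {i j : ℕ} (hij : C.gr i = C.gr j) (d : ℕ)
    (hi : i + d ≤ 5 * C.k + 5) (hj : j + d ≤ 5 * C.k + 5) : C.gr (i + d) = C.gr (j + d) := by
  refine C.chainLift (fun m => C.gr (i + m)) (fun m => C.gr (j + m)) d ?_ ?_ hij d le_rfl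
  · intro d' hd'
    exact ⟨C.grMem (j := i + (d' + 1)) (by omega), C.grSouth (j := i + (d' + 1)) (by omega),
      C.grChain (j := i + d') (by omega)⟩
  · intro d' hd'
    exact ⟨C.grMem (j := j + (d' + 1)) (by omega), C.grSouth (j := j + (d' + 1)) (by omega),
      C.grChain (j := j + d') (by omega)⟩

lemma gcShift {i j : ℕ} (hij : C.gc i = C.gc j) (d : ℕ)
    (hi : i + d ≤ 5 * C.k + 5) (hj : j + d ≤ 5 * C.k + 5) : C.gc (i + d) = C.gc (j + d) := by
  refine C.chainLiftV (fun m => C.gc (i + m)) (fun m => C.gc (j + m)) d ?_ ?_ hij d le_rfl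
  · intro d' hd'
    exact ⟨C.gcMem (j := i + (d' + 1)) (by omega), C.gcWest (j := i + (d' + 1)) (by omega),
      C.gcChain (j := i + d') (by omega)⟩
  · intro d' hd'
    exact ⟨C.gcMem (j := j + (d' + 1)) (by omega), C.gcWest (j := j + (d' + 1)) (by omega),
      C.gcChain (j := j + d') (by omega)⟩

lemma grNe {i j : ℕ} (hi : i ≤ 5 * C.k + 5) (hj : j ≤ 5 * C.k + 5)
    (h1 : i ≠ C.k) (h2 : j = C.k) : C.gr i ≠ C.gr j := by
  intro heq
  have hc := congrArg Tile.color heq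
  rw [C.grColor hi, C.grColor hj, if_neg h1, if_pos h2] at hc
  exact BWG.noConfusion hc

lemma gcNe {i j : ℕ} (hi : i ≤ 5 * C.k + 5) (hj : j ≤ 5 * C.k + 5)
    (h1 : i ≠ C.k) (h2 : j = C.k) : C.gc i ≠ C.gc j := by
  intro heq
  have hc := congrArg Tile.color heq
  rw [C.gcColor hi, C.gcColor hj, if_neg h1, if_pos h2] at hc
  exact BWG.noConfusion hc

lemma grInj {i j : ℕ} (hi : i < j) (hj : j ≤ C.k + 1) : C.gr i ≠ C.gr j := by
  intro heq
  by_cases h2 : j = C.k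
  · exact C.grNe (by omega) (by omega) (by omega) h2 heq
  by_cases h1 : i = C.k
  · exact C.grNe (by omega) (by omega) (by omega) h1 heq.symm
  by_cases hjk : j ≤ C.k
  · -- i < j < k ; shift by k - j
    have := C.grShift heq (C.k - j) (by omega) (by omega)
    exact C.grNe (i := i + (C.k - j)) (by omega) (by omega) (by omega) (by omega) this
  · -- j = k + 1, i ≤ k - 1 ; shift by k - i
    have hjeq : j = C.k + 1 := by omega
    have := C.grShift heq (C.k - i) (by omega) (by omega)
    exact C.grNe (i := j + (C.k - i)) (by omega) (by omega) (by omega) (by omega) this.symm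

lemma gcInj {i j : ℕ} (hi : i < j) (hj : j ≤ C.k + 1) : C.gc i ≠ C.gc j := by
  intro heq
  by_cases h2 : j = C.k
  · exact C.gcNe (by omega) (by omega) (by omega) h2 heq
  by_cases h1 : i = C.k
  · exact C.gcNe (by omega) (by omega) (by omega) h1 heq.symm
  by_cases hjk : j ≤ C.k
  · have := C.gcShift heq (C.k - j) (by omega) (by omega)
    exact C.gcNe (i := i + (C.k - j)) (by omega) (by omega) (by omega) (by omega) this
  · have hjeq : j = C.k + 1 := by omega
    have := C.gcShift heq (C.k - i) (by omega) (by omega)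
    exact C.gcNe (i := j + (C.k - i)) (by omega) (by omega) (by omega) (by omega) this.symm

/-! the tile-type sets -/

def SBs : Finset (Tile BWG G) :=
  C.T.tiles.filter (fun t => t.color = BWG.gray ∧ t.south = C.nb)
def WBs : Finset (Tile BWG G) :=
  C.T.tiles.filter (fun t => t.color = BWG.gray ∧ t.west = C.eb)

lemma SB_WB_absurd {t : Tile BWG G} (h1 : t ∈ C.SBs) (h2 : t ∈ C.WBs) : False := by
  obtain ⟨hm, hg', hs⟩ := Finset.mem_filter.1 h1
  obtain ⟨-, -, hw'⟩ := Finset.mem_filter.1 h2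
  have : t = C.bT := C.uniq hm C.bMem (by rw [hs, C.bSouth]) (by rw [hw', C.bWest])
  rw [this, C.bColor] at hg'
  exact BWG.noConfusion hg'

lemma cardSBWB : C.SBs.card + C.WBs.card ≤ 2 * C.k + 3 := by
  have hdisj : Disjoint C.SBs C.WBs :=
    Finset.disjoint_left.2 (fun {t} h1 h2 => (C.SB_WB_absurd h1 h2).elim)
  have hsub : C.SBs ∪ C.WBs ⊆ C.T.tiles.filter (fun t => t.color = BWG.gray) := by
    intro t ht
    rcases Finset.mem_union.1 ht with h | h
    · obtain ⟨hm, hg', -⟩ := Finset.mem_filter.1 h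
      exact Finset.mem_filter.2 ⟨hm, hg'⟩
    · obtain ⟨hm, hg', -⟩ := Finset.mem_filter.1 h
      exact Finset.mem_filter.2 ⟨hm, hg'⟩
  have h1 : (C.SBs ∪ C.WBs).card = C.SBs.card + C.WBs.card :=
    Finset.card_union_of_disjoint hdisj
  have h2 : (C.SBs ∪ C.WBs).card ≤ (C.T.tiles.filter (fun t => t.color = BWG.gray)).card :=
    Finset.card_le_card hsub
  have h3 := C.hg
  unfold countColor at h3
  omega

def Hs : Finset (Tile BWG G) := ((Finset.range (C.k + 2)).image C.gr).erase (C.gr C.k)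
def Vs : Finset (Tile BWG G) := ((Finset.range (C.k + 2)).image C.gc).erase (C.gc C.k)

lemma mem_Hs {t : Tile BWG G} : t ∈ C.Hs ↔ ∃ m, m ≤ C.k + 1 ∧ m ≠ C.k ∧ t = C.gr m := by
  constructor
  · intro ht
    obtain ⟨hne, ht⟩ := Finset.mem_erase.1 ht
    obtain ⟨m, hm, rfl⟩ := Finset.mem_image.1 ht
    have hm' := Finset.mem_range.1 hm
    refine ⟨m, by omega, ?_, rfl⟩
    intro hmk
    exact hne (by rw [hmk])
  · rintro ⟨m, hm, hmk, rfl⟩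
    refine Finset.mem_erase.2 ⟨C.grNe (by omega) (by omega) hmk rfl, ?_⟩
    exact Finset.mem_image.2 ⟨m, Finset.mem_range.2 (by omega), rfl⟩

lemma mem_Vs {t : Tile BWG G} : t ∈ C.Vs ↔ ∃ m, m ≤ C.k + 1 ∧ m ≠ C.k ∧ t = C.gc m := by
  constructor
  · intro ht
    obtain ⟨hne, ht⟩ := Finset.mem_erase.1 ht
    obtain ⟨m, hm, rfl⟩ := Finset.mem_image.1 ht
    have hm' := Finset.mem_range.1 hm
    refine ⟨m, by omega, ?_, rfl⟩
    intro hmk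
    exact hne (by rw [hmk])
  · rintro ⟨m, hm, hmk, rfl⟩
    refine Finset.mem_erase.2 ⟨C.gcNe (by omega) (by omega) hmk rfl, ?_⟩
    exact Finset.mem_image.2 ⟨m, Finset.mem_range.2 (by omega), rfl⟩

lemma Hs_card : C.Hs.card = C.k + 1 := by
  have himg : ((Finset.range (C.k + 2)).image C.gr).card = C.k + 2 := by
    rw [Finset.card_image_of_injOn, Finset.card_range]
    intro i hi j hj heq
    have hi' := Finset.mem_range.1 hi
    have hj' := Finset.mem_range.1 hj
    by_contra hne
    rcases Nat.lt_or_ge i j with h | h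
    · exact C.grInj h (by omega) heq
    · exact C.grInj (by omega) (by omega) heq.symm
  have hmem : C.gr C.k ∈ (Finset.range (C.k + 2)).image C.gr :=
    Finset.mem_image.2 ⟨C.k, Finset.mem_range.2 (by omega), rfl⟩
  rw [Hs, Finset.card_erase_of_mem hmem, himg]; omega

lemma Vs_card : C.Vs.card = C.k + 1 := by
  have himg : ((Finset.range (C.k + 2)).image C.gc).card = C.k + 2 := by
    rw [Finset.card_image_of_injOn, Finset.card_range]
    intro i hi j hj heq
    have hi' := Finset.mem_range.1 hi
    have hj' := Finset.mem_range.1 hj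
    by_contra hne
    rcases Nat.lt_or_ge i j with h | h
    · exact C.gcInj h (by omega) heq
    · exact C.gcInj (by omega) (by omega) heq.symm
  have hmem : C.gc C.k ∈ (Finset.range (C.k + 2)).image C.gc :=
    Finset.mem_image.2 ⟨C.k, Finset.mem_range.2 (by omega), rfl⟩
  rw [Vs, Finset.card_erase_of_mem hmem, himg]; omega

lemma Hs_sub : C.Hs ⊆ C.SBs := by
  intro t ht
  obtain ⟨m, hm, hmk, rfl⟩ := C.mem_Hs.1 ht
  refine Finset.mem_filter.2 ⟨C.grMem (by omega), ?_, C.grSouth (by omega)⟩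
  rw [C.grColor (by omega), if_neg hmk]

lemma Vs_sub : C.Vs ⊆ C.WBs := by
  intro t ht
  obtain ⟨m, hm, hmk, rfl⟩ := C.mem_Vs.1 ht
  refine Finset.mem_filter.2 ⟨C.gcMem (by omega), ?_, C.gcWest (by omega)⟩
  rw [C.gcColor (by omega), if_neg hmk]

/-! supertile top rows and right columns -/

/-- top-row tile of supertile `(x,y)` at inner position `(i+1, ℓ-1)`. -/
def ur (x y i : ℕ) : Tile BWG G :=
  C.f (x * (5 * C.k + 8) + i) (y * (5 * C.k + 8) + (5 * C.k + 6))

/-- right-column tile of supertile `(x,y)` at inner position `(ℓ-1, j+1)`. -/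
def rc (x y j : ℕ) : Tile BWG G :=
  C.f (x * (5 * C.k + 8) + (5 * C.k + 6)) (y * (5 * C.k + 8) + j)

lemma urMem {x y i : ℕ} (hx : x < C.w) (hy : y < C.h) (hi : i ≤ 5 * C.k + 6) :
    C.ur x y i ∈ C.T.tiles := C.mem (C.inM hx (by omega)) (C.inN hy (by omega))

lemma rcMem {x y j : ℕ} (hx : x < C.w) (hy : y < C.h) (hj : j ≤ 5 * C.k + 6) :
    C.rc x y j ∈ C.T.tiles := C.mem (C.inM hx (by omega)) (C.inN hy (by omega))

lemma urColor {x y i : ℕ} (hx : x < C.w) (hy : y < C.h) (hi : i ≤ 5 * C.k + 6) :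
    (C.ur x y i).color = (if i = C.P x y then BWG.white else BWG.gray) :=
  C.colRow hx hy hi

lemma rcColor {x y j : ℕ} (hx : x < C.w) (hy : y < C.h) (hj : j ≤ 5 * C.k + 5) :
    (C.rc x y j).color = (if j = C.P x y then BWG.white else BWG.gray) :=
  C.colCol hx hy hj

lemma urSouth {x y i : ℕ} (hx : x < C.w) (hy : y < C.h) (hi : i ≤ 5 * C.k + 5) :
    (C.ur x y i).south = C.nb := by
  have e : y * (5 * C.k + 8) + (5 * C.k + 6) = (y * (5 * C.k + 8) + (5 * C.k + 5)) + 1 := by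
    omega
  have hs := C.slink (X := x * (5 * C.k + 8) + i) (Y := y * (5 * C.k + 8) + (5 * C.k + 5))
    (C.inM hx (by omega)) (by rw [← e]; exact C.inN hy (by omega))
  have hblack := C.blackEq (C.inM hx (by omega)) (C.inN hy (by omega))
    (C.colBlack hx hy (a := i) hi (b := 5 * C.k + 5) (by omega))
  rw [hblack] at hs
  show (C.f (x * (5 * C.k + 8) + i) (y * (5 * C.k + 8) + (5 * C.k + 6))).south = C.nb
  rw [e]
  exact hs

lemma urChain {x y i : ℕ} (hx : x < C.w) (hy : y < C.h) (hi : i + 1 ≤ 5 * C.k + 6) :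
    (C.ur x y (i + 1)).west = (C.ur x y i).east := by
  have e : x * (5 * C.k + 8) + (i + 1) = (x * (5 * C.k + 8) + i) + 1 := by omega
  show (C.f (x * (5 * C.k + 8) + (i + 1)) _).west = _
  rw [e]
  exact C.wlink (by rw [← e]; exact C.inM hx (by omega)) (C.inN hy (by omega))

lemma rcWest {x y j : ℕ} (hx : x < C.w) (hy : y < C.h) (hj : j ≤ 5 * C.k + 5) :
    (C.rc x y j).west = C.eb := by
  have e : x * (5 * C.k + 8) + (5 * C.k + 6) = (x * (5 * C.k + 8) + (5 * C.k + 5)) + 1 := by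
    omega
  have hs := C.wlink (X := x * (5 * C.k + 8) + (5 * C.k + 5)) (Y := y * (5 * C.k + 8) + j)
    (by rw [← e]; exact C.inM hx (by omega)) (C.inN hy (by omega))
  have hblack := C.blackEq (C.inM hx (by omega)) (C.inN hy (by omega))
    (C.colBlack hx hy (a := 5 * C.k + 5) (by omega) (b := j) hj)
  rw [hblack] at hs
  show (C.f (x * (5 * C.k + 8) + (5 * C.k + 6)) (y * (5 * C.k + 8) + j)).west = C.eb
  rw [e]
  exact hs

lemma rcChain {x y j : ℕ} (hx : x < C.w) (hy : y < C.h) (hj : j + 1 ≤ 5 * C.k + 6) :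
    (C.rc x y (j + 1)).south = (C.rc x y j).north := by
  have e : y * (5 * C.k + 8) + (j + 1) = (y * (5 * C.k + 8) + j) + 1 := by omega
  show (C.f _ (y * (5 * C.k + 8) + (j + 1))).south = _
  rw [e]
  exact C.slink (C.inM hx (by omega)) (by rw [← e]; exact C.inN hy (by omega))

lemma cornSouth {x y : ℕ} (hx : x < C.w) (hy : y < C.h) :
    (C.ur x y (5 * C.k + 6)).south = (C.rc x y (5 * C.k + 5)).north := by
  have h := C.rcChain hx hy (j := 5 * C.k + 5) (by omega)
  exact h

lemma urSB {x y i : ℕ} (hx : x < C.w) (hy : y < C.h) (hi : i ≤ 5 * C.k + 5)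
    (hne : i ≠ C.P x y) : C.ur x y i ∈ C.SBs := by
  refine Finset.mem_filter.2 ⟨C.urMem hx hy (by omega), ?_, C.urSouth hx hy hi⟩
  rw [C.urColor hx hy (by omega), if_neg hne]

lemma rcWB {x y j : ℕ} (hx : x < C.w) (hy : y < C.h) (hj : j ≤ 5 * C.k + 5)
    (hne : j ≠ C.P x y) : C.rc x y j ∈ C.WBs := by
  refine Finset.mem_filter.2 ⟨C.rcMem hx hy (by omega), ?_, C.rcWest hx hy hj⟩
  rw [C.rcColor hx hy hj, if_neg hne]

/-- The row machine: if every supertile's first top-row tile is a horizontal counter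
tile, and the horizontal counter tail is constant, then all top rows are standard. -/
lemma rowMachine
    (hu0 : ∀ x < C.w, ∀ y < C.h, ∃ m, m ≤ C.k + 1 ∧ m ≠ C.k ∧ C.ur x y 0 = C.gr m)
    (hK2 : C.gr (C.k + 2) = C.gr (C.k + 1)) :
    ∀ x < C.w, ∀ y < C.h, ∀ i ≤ 5 * C.k + 5,
      C.ur x y i = if i ≤ C.P x y then C.gr (C.k - C.P x y + i) else C.gr (C.k + 1) := by
  intro x hx y hy
  obtain ⟨m, hm, hmk, h0⟩ := hu0 x hx y hy
  have hc := C.hP x hx y hy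
  have hshift : ∀ d, d ≤ 5 * C.k + 5 → m + d ≤ 5 * C.k + 5 → C.ur x y d = C.gr (m + d) := by
    intro d hd hmd
    refine C.chainLift (fun e => C.ur x y e) (fun e => C.gr (m + e)) d ?_ ?_ h0 d le_rfl
    · intro d' hd'
      exact ⟨C.urMem hx hy (by omega), C.urSouth hx hy (by omega), C.urChain hx hy (by omega)⟩
    · intro d' hd'
      exact ⟨C.grMem (j := m + (d' + 1)) (by omega), C.grSouth (j := m + (d' + 1)) (by omega),
        C.grChain (j := m + d') (by omega)⟩
  by_cases hm1 : m = C.k + 1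
  · exfalso
    have heq := hshift (C.P x y) (by omega) (by omega)
    have h1 := congrArg Tile.color heq
    rw [C.urColor hx hy (by omega), C.grColor (by omega), if_pos rfl,
      if_neg (by omega)] at h1
    exact BWG.noConfusion h1
  have hmc : m = C.k - C.P x y := by
    by_contra hne
    rcases Nat.lt_or_ge m (C.k - C.P x y) with hlt | hge
    · have heq := hshift (C.P x y) (by omega) (by omega)
      have h1 := congrArg Tile.color heq
      rw [C.urColor hx hy (by omega), C.grColor (by omega), if_pos rfl,
        if_neg (by omega)] at h1
      exact BWG.noConfusion h1
    · have heq := hshift (C.k - m) (by omega) (by omega)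
      have h1 := congrArg Tile.color heq
      rw [C.urColor hx hy (by omega), C.grColor (by omega), if_neg (by omega),
        if_pos (by omega)] at h1
      exact BWG.noConfusion h1
  have hpre : ∀ i ≤ C.P x y, C.ur x y i = C.gr (C.k - C.P x y + i) := by
    intro i hi
    have := hshift i (by omega) (by omega)
    rw [hmc] at this
    exact this
  have htb : C.ur x y (C.P x y + 1) = C.gr (C.k + 1) := by
    refine C.uniq (C.urMem hx hy (by omega)) (C.grMem (by omega)) ?_ ?_
    · rw [C.urSouth hx hy (by omega), C.grSouth (by omega)]
    · rw [C.urChain hx hy (by omega), C.grChain (j := C.k) (by omega)]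
      have h1 := hpre (C.P x y) le_rfl
      have e : C.k - C.P x y + C.P x y = C.k := by omega
      rw [h1, e]
  have htail : ∀ d, C.P x y + 1 + d ≤ 5 * C.k + 5 → C.ur x y (C.P x y + 1 + d) = C.gr (C.k + 1) := by
    intro d
    induction d with
    | zero => intro _; exact htb
    | succ d ih =>
        intro hd
        have hprev := ih (by omega)
        have hstep : C.ur x y (C.P x y + 1 + (d + 1)) = C.gr (C.k + 2) := by
          have e : C.P x y + 1 + (d + 1) = (C.P x y + 1 + d) + 1 := by omega
          rw [e]
          refine C.uniq (C.urMem hx hy (by omega)) (C.grMem (by omega)) ?_ ?_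
          · rw [C.urSouth hx hy (by omega), C.grSouth (by omega)]
          · rw [C.urChain hx hy (by omega), C.grChain (j := C.k + 1) (by omega), hprev]
        rw [hstep, hK2]
  intro i hi
  rcases le_or_gt i (C.P x y) with h | h
  · rw [if_pos h]
    exact hpre i h
  · rw [if_neg (by omega)]
    have := htail (i - (C.P x y + 1)) (by omega)
    have e : C.P x y + 1 + (i - (C.P x y + 1)) = i := by omega
    rw [e] at this
    exact this

/-- The column machine, mirror of `rowMachine`. -/
lemma colMachine
    (hr0 : ∀ x < C.w, ∀ y < C.h, ∃ m, m ≤ C.k + 1 ∧ m ≠ C.k ∧ C.rc x y 0 = C.gc m)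
    (hK2 : C.gc (C.k + 2) = C.gc (C.k + 1)) :
    ∀ x < C.w, ∀ y < C.h, ∀ j ≤ 5 * C.k + 5,
      C.rc x y j = if j ≤ C.P x y then C.gc (C.k - C.P x y + j) else C.gc (C.k + 1) := by
  intro x hx y hy
  obtain ⟨m, hm, hmk, h0⟩ := hr0 x hx y hy
  have hc := C.hP x hx y hy
  have hshift : ∀ d, d ≤ 5 * C.k + 5 → m + d ≤ 5 * C.k + 5 → C.rc x y d = C.gc (m + d) := by
    intro d hd hmd
    refine C.chainLiftV (fun e => C.rc x y e) (fun e => C.gc (m + e)) d ?_ ?_ h0 d le_rfl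
    · intro d' hd'
      exact ⟨C.rcMem hx hy (by omega), C.rcWest hx hy (by omega), C.rcChain hx hy (by omega)⟩
    · intro d' hd'
      exact ⟨C.gcMem (j := m + (d' + 1)) (by omega), C.gcWest (j := m + (d' + 1)) (by omega),
        C.gcChain (j := m + d') (by omega)⟩
  by_cases hm1 : m = C.k + 1
  · exfalso
    have heq := hshift (C.P x y) (by omega) (by omega)
    have h1 := congrArg Tile.color heq
    rw [C.rcColor hx hy (by omega), C.gcColor (by omega), if_pos rfl,
      if_neg (by omega)] at h1
    exact BWG.noConfusion h1
  have hmc : m = C.k - C.P x y := by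
    by_contra hne
    rcases Nat.lt_or_ge m (C.k - C.P x y) with hlt | hge
    · have heq := hshift (C.P x y) (by omega) (by omega)
      have h1 := congrArg Tile.color heq
      rw [C.rcColor hx hy (by omega), C.gcColor (by omega), if_pos rfl,
        if_neg (by omega)] at h1
      exact BWG.noConfusion h1
    · have heq := hshift (C.k - m) (by omega) (by omega)
      have h1 := congrArg Tile.color heq
      rw [C.rcColor hx hy (by omega), C.gcColor (by omega), if_neg (by omega),
        if_pos (by omega)] at h1
      exact BWG.noConfusion h1
  have hpre : ∀ j ≤ C.P x y, C.rc x y j = C.gc (C.k - C.P x y + j) := by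
    intro j hj
    have := hshift j (by omega) (by omega)
    rw [hmc] at this
    exact this
  have htb : C.rc x y (C.P x y + 1) = C.gc (C.k + 1) := by
    refine C.uniq (C.rcMem hx hy (by omega)) (C.gcMem (by omega)) ?_ ?_
    · rw [C.rcChain hx hy (by omega), C.gcChain (j := C.k) (by omega)]
      have h1 := hpre (C.P x y) le_rfl
      have e : C.k - C.P x y + C.P x y = C.k := by omega
      rw [h1, e]
    · rw [C.rcWest hx hy (by omega), C.gcWest (by omega)]
  have htail : ∀ d, C.P x y + 1 + d ≤ 5 * C.k + 5 → C.rc x y (C.P x y + 1 + d) = C.gc (C.k + 1) := by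
    intro d
    induction d with
    | zero => intro _; exact htb
    | succ d ih =>
        intro hd
        have hprev := ih (by omega)
        have hstep : C.rc x y (C.P x y + 1 + (d + 1)) = C.gc (C.k + 2) := by
          have e : C.P x y + 1 + (d + 1) = (C.P x y + 1 + d) + 1 := by omega
          rw [e]
          refine C.uniq (C.rcMem hx hy (by omega)) (C.gcMem (by omega)) ?_ ?_
          · rw [C.rcChain hx hy (by omega), C.gcChain (j := C.k + 1) (by omega), hprev]
          · rw [C.rcWest hx hy (by omega), C.gcWest (by omega)]
        rw [hstep, hK2]
  intro j hj
  rcases le_or_gt j (C.P x y) with h | h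
  · rw [if_pos h]
    exact hpre j h
  · rw [if_neg (by omega)]
    have := htail (j - (C.P x y + 1)) (by omega)
    have e : C.P x y + 1 + (j - (C.P x y + 1)) = j := by omega
    rw [e] at this
    exact this

/-! helper contradiction lemmas -/

lemma grNotB {m : ℕ} (hm : m ≤ 5 * C.k + 5) : C.gr m ≠ C.bT := by
  intro h
  have hc := congrArg Tile.color h
  rw [C.grColor hm, C.bColor] at hc
  split_ifs at hc <;> exact BWG.noConfusion hc

lemma gcNotB {m : ℕ} (hm : m ≤ 5 * C.k + 5) : C.gc m ≠ C.bT := by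
  intro h
  have hc := congrArg Tile.color h
  rw [C.gcColor hm, C.bColor] at hc
  split_ifs at hc <;> exact BWG.noConfusion hc

lemma urNotB {x y i : ℕ} (hx : x < C.w) (hy : y < C.h) (hi : i ≤ 5 * C.k + 6) :
    C.ur x y i ≠ C.bT := by
  intro h
  have hc := congrArg Tile.color h
  rw [C.urColor hx hy hi, C.bColor] at hc
  split_ifs at hc <;> exact BWG.noConfusion hc

lemma rcNotB {x y j : ℕ} (hx : x < C.w) (hy : y < C.h) (hj : j ≤ 5 * C.k + 5) :
    C.rc x y j ≠ C.bT := by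
  intro h
  have hc := congrArg Tile.color h
  rw [C.rcColor hx hy hj, C.bColor] at hc
  split_ifs at hc <;> exact BWG.noConfusion hc

lemma grEastEb {m : ℕ} (hm : m ≤ 5 * C.k + 4) (he : (C.gr m).east = C.eb) : False := by
  have : C.gr (m + 1) = C.bT := by
    refine C.uniq (C.grMem (by omega)) C.bMem ?_ ?_
    · rw [C.grSouth (by omega), C.bSouth]
    · rw [C.grChain (by omega), he, C.bWest]
  exact C.grNotB (by omega) this

lemma gcNorthNb {m : ℕ} (hm : m ≤ 5 * C.k + 4) (hn : (C.gc m).north = C.nb) : False := by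
  have : C.gc (m + 1) = C.bT := by
    refine C.uniq (C.gcMem (by omega)) C.bMem ?_ ?_
    · rw [C.gcChain (by omega), hn, C.bSouth]
    · rw [C.gcWest (by omega), C.bWest]
  exact C.gcNotB (by omega) this

lemma urEastEb {x y i : ℕ} (hx : x < C.w) (hy : y < C.h) (hi : i + 1 ≤ 5 * C.k + 5)
    (he : (C.ur x y i).east = C.eb) : False := by
  have : C.ur x y (i + 1) = C.bT := by
    refine C.uniq (C.urMem hx hy (by omega)) C.bMem ?_ ?_
    · rw [C.urSouth hx hy (by omega), C.bSouth]
    · rw [C.urChain hx hy (by omega), he, C.bWest]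
  exact C.urNotB hx hy (by omega) this

lemma rcNorthNb {x y j : ℕ} (hx : x < C.w) (hy : y < C.h) (hj : j + 1 ≤ 5 * C.k + 5)
    (hn : (C.rc x y j).north = C.nb) : False := by
  have : C.rc x y (j + 1) = C.bT := by
    refine C.uniq (C.rcMem hx hy (by omega)) C.bMem ?_ ?_
    · rw [C.rcChain hx hy (by omega), hn, C.bSouth]
    · rw [C.rcWest hx hy (by omega), C.bWest]
  exact C.rcNotB hx hy (by omega) this

lemma grK2ofHs (h : C.gr (C.k + 2) ∈ C.Hs) : C.gr (C.k + 2) = C.gr (C.k + 1) := by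
  obtain ⟨m, hm, hmk, heq⟩ := C.mem_Hs.1 h
  by_cases hm1 : m = C.k + 1
  · rw [heq, hm1]
  exfalso
  have hmlt : m ≤ C.k - 1 := by omega
  have hsh := C.grShift heq (C.k - m) (by omega) (by omega)
  exact C.grNe (i := C.k + 2 + (C.k - m)) (by omega) (by omega) (by omega) (by omega) hsh

lemma gcK2ofVs (h : C.gc (C.k + 2) ∈ C.Vs) : C.gc (C.k + 2) = C.gc (C.k + 1) := by
  obtain ⟨m, hm, hmk, heq⟩ := C.mem_Vs.1 h
  by_cases hm1 : m = C.k + 1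
  · rw [heq, hm1]
  exfalso
  have hmlt : m ≤ C.k - 1 := by omega
  have hsh := C.gcShift heq (C.k - m) (by omega) (by omega)
  exact C.gcNe (i := C.k + 2 + (C.k - m)) (by omega) (by omega) (by omega) (by omega) hsh

lemma grK2SB : C.gr (C.k + 2) ∈ C.SBs := by
  refine Finset.mem_filter.2 ⟨C.grMem (by omega), ?_, C.grSouth (by omega)⟩
  rw [C.grColor (by omega), if_neg (by omega)]

lemma gcK2WB : C.gc (C.k + 2) ∈ C.WBs := by
  refine Finset.mem_filter.2 ⟨C.gcMem (by omega), ?_, C.gcWest (by omega)⟩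
  rw [C.gcColor (by omega), if_neg (by omega)]

lemma graySat (hcard : 2 * C.k + 3 ≤ C.SBs.card + C.WBs.card) {t : Tile BWG G}
    (ht : t ∈ C.T.tiles) (hgray : t.color = BWG.gray) : t ∈ C.SBs ∨ t ∈ C.WBs := by
  have hdisj : Disjoint C.SBs C.WBs :=
    Finset.disjoint_left.2 (fun {t} h1 h2 => (C.SB_WB_absurd h1 h2).elim)
  have h1 : (C.SBs ∪ C.WBs).card = C.SBs.card + C.WBs.card :=
    Finset.card_union_of_disjoint hdisj
  have hsub : C.SBs ∪ C.WBs ⊆ C.T.tiles.filter (fun t => t.color = BWG.gray) := by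
    intro t ht'
    rcases Finset.mem_union.1 ht' with h | h
    · obtain ⟨hm, hg', -⟩ := Finset.mem_filter.1 h
      exact Finset.mem_filter.2 ⟨hm, hg'⟩
    · obtain ⟨hm, hg', -⟩ := Finset.mem_filter.1 h
      exact Finset.mem_filter.2 ⟨hm, hg'⟩
  have hg2 := C.hg
  unfold countColor at hg2
  have heq : C.T.tiles.filter (fun t => t.color = BWG.gray) = C.SBs ∪ C.WBs :=
    (Finset.eq_of_subset_of_card_le hsub (by omega)).symm
  have : t ∈ C.SBs ∪ C.WBs := by
    rw [← heq]; exact Finset.mem_filter.2 ⟨ht, hgray⟩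
  exact Finset.mem_union.1 this

/-- the corner tile of supertile (0,0) is gray and realized -/
lemma cornGray : (C.ur 0 0 (5 * C.k + 6)).color = BWG.gray := by
  have hc := C.hP 0 C.hw 0 C.hh
  rw [C.urColor C.hw C.hh (by omega), if_neg (by omega)]

/-- Key structure: the gray tile families are exactly the two counters. -/
lemma cleanSB : C.SBs = C.Hs := by
  by_contra hne
  have hss : C.Hs ⊂ C.SBs := (Finset.ssubset_iff_subset_ne).2 ⟨C.Hs_sub, fun h => hne h.symm⟩
  obtain ⟨x₁, hx₁S, hx₁H⟩ := Finset.exists_of_ssubset hss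
  have hcardS : C.k + 2 ≤ C.SBs.card := by
    have := Finset.card_lt_card hss
    have := C.Hs_card
    omega
  have hcardW : C.WBs.card ≤ C.k + 1 := by
    have := C.cardSBWB; omega
  have hWV : C.WBs = C.Vs := by
    refine (Finset.eq_of_subset_of_card_le C.Vs_sub ?_).symm
    rw [C.Vs_card]; exact hcardW
  -- columns are standard
  have hr0 : ∀ x < C.w, ∀ y < C.h, ∃ m, m ≤ C.k + 1 ∧ m ≠ C.k ∧ C.rc x y 0 = C.gc m := by
    intro x hx y hy
    have hc := C.hP x hx y hy
    have : C.rc x y 0 ∈ C.Vs := by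
      rw [← hWV]; exact C.rcWB hx hy (by omega) (by omega)
    exact C.mem_Vs.1 this
  have hK2c : C.gc (C.k + 2) = C.gc (C.k + 1) := by
    apply C.gcK2ofVs; rw [← hWV]; exact C.gcK2WB
  have colStd := C.colMachine hr0 hK2c
  -- corner of supertile (0,0)
  have hP00 := C.hP 0 C.hw 0 C.hh
  have hkapMem : C.ur 0 0 (5 * C.k + 6) ∈ C.T.tiles := C.urMem C.hw C.hh (by omega)
  have hcard2 : 2 * C.k + 3 ≤ C.SBs.card + C.WBs.card := by
    have h1 := Finset.card_le_card C.Vs_sub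
    have h2 := C.Vs_card
    omega
  rcases C.graySat hcard2 hkapMem C.cornGray with hkap | hkap
  · -- corner in SBs : south is nb, contradiction via column below
    have hsnb : (C.ur 0 0 (5 * C.k + 6)).south = C.nb := (Finset.mem_filter.1 hkap).2.2
    have h1 := C.cornSouth C.hw C.hh
    have h2 := colStd 0 C.hw 0 C.hh (5 * C.k + 5) le_rfl
    rw [if_neg (by omega)] at h2
    rw [h1, h2] at hsnb
    exact C.gcNorthNb (by omega) hsnb
  · -- corner in WBs : west is eb
    have hweb : (C.ur 0 0 (5 * C.k + 6)).west = C.eb := (Finset.mem_filter.1 hkap).2.2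
    have hchain := C.urChain C.hw C.hh (i := 5 * C.k + 5) (by omega)
    have hx1east : (C.ur 0 0 (5 * C.k + 5)).east = C.eb := by rw [← hchain]; exact hweb
    set x₂ := C.ur 0 0 (5 * C.k + 5) with hx₂def
    have hx₂S : x₂ ∈ C.SBs := C.urSB C.hw C.hh (by omega) (by omega)
    -- x₂ is not a counter tile
    have hx₂H : x₂ ∉ C.Hs := by
      intro hmem
      obtain ⟨m, hm, hmk, heq⟩ := C.mem_Hs.1 hmem
      exact C.grEastEb (m := m) (by omega) (by rw [← heq]; exact hx1east)
    -- hence SBs = insert x₂ Hs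
    have hsub2 : insert x₂ C.Hs ⊆ C.SBs := by
      intro t ht
      rcases Finset.mem_insert.1 ht with h | h
      · rw [h]; exact hx₂S
      · exact C.Hs_sub h
    have hcard3 : C.SBs.card ≤ C.k + 2 := by
      have h1 := C.cardSBWB
      have h2 : C.WBs.card = C.Vs.card := by rw [hWV]
      have h3 := C.Vs_card
      omega
    have hSBeq : C.SBs = insert x₂ C.Hs := by
      refine (Finset.eq_of_subset_of_card_le hsub2 ?_).symm
      rw [Finset.card_insert_of_notMem hx₂H, C.Hs_card]
      exact hcard3
    -- rows are standard
    have hu0 : ∀ x < C.w, ∀ y < C.h, ∃ m, m ≤ C.k + 1 ∧ m ≠ C.k ∧ C.ur x y 0 = C.gr m := by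
      intro x hx y hy
      have hc := C.hP x hx y hy
      have hmem : C.ur x y 0 ∈ C.SBs := C.urSB hx hy (by omega) (by omega)
      rw [hSBeq] at hmem
      rcases Finset.mem_insert.1 hmem with h | h
      · exfalso
        exact C.urEastEb hx hy (i := 0) (by omega) (by rw [h]; exact hx1east)
      · exact C.mem_Hs.1 h
    have hK2r : C.gr (C.k + 2) = C.gr (C.k + 1) := by
      have hmem := C.grK2SB
      rw [hSBeq] at hmem
      rcases Finset.mem_insert.1 hmem with h | h
      · exfalso
        exact C.grEastEb (m := C.k + 2) (by omega) (by rw [h]; exact hx1east)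
      · exact C.grK2ofHs h
    have rowStd := C.rowMachine hu0 hK2r
    have hlast := rowStd 0 C.hw 0 C.hh (5 * C.k + 5) le_rfl
    rw [if_neg (by omega)] at hlast
    apply hx₂H
    rw [hx₂def, hlast]
    exact C.mem_Hs.2 ⟨C.k + 1, le_rfl, by omega, rfl⟩

lemma cleanWB : C.WBs = C.Vs := by
  have hSH := C.cleanSB
  by_contra hne
  have hss : C.Vs ⊂ C.WBs := (Finset.ssubset_iff_subset_ne).2 ⟨C.Vs_sub, fun h => hne h.symm⟩
  obtain ⟨x₁, hx₁W, hx₁V⟩ := Finset.exists_of_ssubset hss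
  have hcardW : C.k + 2 ≤ C.WBs.card := by
    have := Finset.card_lt_card hss
    have := C.Vs_card
    omega
  -- rows are standard
  have hu0 : ∀ x < C.w, ∀ y < C.h, ∃ m, m ≤ C.k + 1 ∧ m ≠ C.k ∧ C.ur x y 0 = C.gr m := by
    intro x hx y hy
    have hc := C.hP x hx y hy
    have hmem : C.ur x y 0 ∈ C.SBs := C.urSB hx hy (by omega) (by omega)
    rw [hSH] at hmem
    exact C.mem_Hs.1 hmem
  have hK2r : C.gr (C.k + 2) = C.gr (C.k + 1) := by
    apply C.grK2ofHs; rw [← hSH]; exact C.grK2SB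
  have rowStd := C.rowMachine hu0 hK2r
  have hP00 := C.hP 0 C.hw 0 C.hh
  have hkapMem : C.ur 0 0 (5 * C.k + 6) ∈ C.T.tiles := C.urMem C.hw C.hh (by omega)
  have hcard2 : 2 * C.k + 3 ≤ C.SBs.card + C.WBs.card := by
    have h1 := Finset.card_le_card C.Hs_sub
    have h2 := C.Hs_card
    omega
  -- WBs = insert x₁ Vs
  have hsub2 : insert x₁ C.Vs ⊆ C.WBs := by
    intro t ht
    rcases Finset.mem_insert.1 ht with h | h
    · rw [h]; exact hx₁W
    · exact C.Vs_sub h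
  have hcard3 : C.WBs.card ≤ C.k + 2 := by
    have h1 := C.cardSBWB
    have h2 : C.SBs.card = C.Hs.card := by rw [hSH]
    have h3 := C.Hs_card
    omega
  have hWBeq : C.WBs = insert x₁ C.Vs := by
    refine (Finset.eq_of_subset_of_card_le hsub2 ?_).symm
    rw [Finset.card_insert_of_notMem hx₁V, C.Vs_card]
    exact hcard3
  rcases C.graySat hcard2 hkapMem C.cornGray with hkap | hkap
  · -- corner in SBs : south nb
    have hsnb : (C.ur 0 0 (5 * C.k + 6)).south = C.nb := (Finset.mem_filter.1 hkap).2.2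
    have h1 := C.cornSouth C.hw C.hh
    have hrcnb : (C.rc 0 0 (5 * C.k + 5)).north = C.nb := by rw [← h1]; exact hsnb
    have hrcW : C.rc 0 0 (5 * C.k + 5) ∈ C.WBs := C.rcWB C.hw C.hh (by omega) (by omega)
    rw [hWBeq] at hrcW
    rcases Finset.mem_insert.1 hrcW with h | h
    · -- rc = x₁, so x₁.north = nb
      have hx1nb : x₁.north = C.nb := by rw [← h]; exact hrcnb
      -- columns standard
      have hr0 : ∀ x < C.w, ∀ y < C.h, ∃ m, m ≤ C.k + 1 ∧ m ≠ C.k ∧ C.rc x y 0 = C.gc m := by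
        intro x hx y hy
        have hc := C.hP x hx y hy
        have hmem : C.rc x y 0 ∈ C.WBs := C.rcWB hx hy (by omega) (by omega)
        rw [hWBeq] at hmem
        rcases Finset.mem_insert.1 hmem with h' | h'
        · exfalso
          exact C.rcNorthNb hx hy (j := 0) (by omega) (by rw [h']; exact hx1nb)
        · exact C.mem_Vs.1 h'
      have hK2c : C.gc (C.k + 2) = C.gc (C.k + 1) := by
        have hmem := C.gcK2WB
        rw [hWBeq] at hmem
        rcases Finset.mem_insert.1 hmem with h' | h'
        · exfalso
          exact C.gcNorthNb (m := C.k + 2) (by omega) (by rw [h']; exact hx1nb)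
        · exact C.gcK2ofVs h'
      have colStd := C.colMachine hr0 hK2c
      have hlast := colStd 0 C.hw 0 C.hh (5 * C.k + 5) le_rfl
      rw [if_neg (by omega)] at hlast
      apply hx₁V
      rw [← h, hlast]
      exact C.mem_Vs.2 ⟨C.k + 1, le_rfl, by omega, rfl⟩
    · -- rc is a vertical counter tile with north nb : contradiction
      obtain ⟨m, hm, hmk, heq⟩ := C.mem_Vs.1 h
      exact C.gcNorthNb (m := m) (by omega) (by rw [← heq]; exact hrcnb)
  · -- corner in WBs : west eb
    have hweb : (C.ur 0 0 (5 * C.k + 6)).west = C.eb := (Finset.mem_filter.1 hkap).2.2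
    have hchain := C.urChain C.hw C.hh (i := 5 * C.k + 5) (by omega)
    have hlast := rowStd 0 C.hw 0 C.hh (5 * C.k + 5) le_rfl
    rw [if_neg (by omega)] at hlast
    have : (C.gr (C.k + 1)).east = C.eb := by
      rw [← hlast, ← hchain]; exact hweb
    exact C.grEastEb (m := C.k + 1) (by omega) this

/-! standard rows and columns -/

lemma stdRow : ∀ x < C.w, ∀ y < C.h, ∀ i ≤ 5 * C.k + 5,
    C.ur x y i = if i ≤ C.P x y then C.gr (C.k - C.P x y + i) else C.gr (C.k + 1) := by
  apply C.rowMachine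
  · intro x hx y hy
    have hc := C.hP x hx y hy
    have hmem : C.ur x y 0 ∈ C.SBs := C.urSB hx hy (by omega) (by omega)
    rw [C.cleanSB] at hmem
    exact C.mem_Hs.1 hmem
  · apply C.grK2ofHs
    rw [← C.cleanSB]
    exact C.grK2SB

lemma stdCol : ∀ x < C.w, ∀ y < C.h, ∀ j ≤ 5 * C.k + 5,
    C.rc x y j = if j ≤ C.P x y then C.gc (C.k - C.P x y + j) else C.gc (C.k + 1) := by
  apply C.colMachine
  · intro x hx y hy
    have hc := C.hP x hx y hy
    have hmem : C.rc x y 0 ∈ C.WBs := C.rcWB hx hy (by omega) (by omega)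
    rw [C.cleanWB] at hmem
    exact C.mem_Vs.1 hmem
  · apply C.gcK2ofVs
    rw [← C.cleanWB]
    exact C.gcK2WB

lemma urNorth {x y i : ℕ} (hx : x < C.w) (hy : y < C.h) (hi : i ≤ 5 * C.k + 5) :
    (C.ur x y i).north = C.nb := by
  have hc := C.hP x hx y hy
  rw [C.stdRow x hx y hy i hi]
  split_ifs with h
  · exact C.grNorth (by omega)
  · exact C.grNorth (by omega)

lemma rcEast {x y j : ℕ} (hx : x < C.w) (hy : y < C.h) (hj : j ≤ 5 * C.k + 5) :
    (C.rc x y j).east = C.eb := by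
  have hc := C.hP x hx y hy
  rw [C.stdCol x hx y hy j hj]
  split_ifs with h
  · exact C.gcEast (by omega)
  · exact C.gcEast (by omega)

lemma urLastEq {x y : ℕ} (hx : x < C.w) (hy : y < C.h) :
    C.ur x y (5 * C.k + 5) = C.gr (C.k + 1) := by
  have hc := C.hP x hx y hy
  rw [C.stdRow x hx y hy (5 * C.k + 5) le_rfl, if_neg (by omega)]

lemma rcLastEq {x y : ℕ} (hx : x < C.w) (hy : y < C.h) :
    C.rc x y (5 * C.k + 5) = C.gc (C.k + 1) := by
  have hc := C.hP x hx y hy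
  rw [C.stdCol x hx y hy (5 * C.k + 5) le_rfl, if_neg (by omega)]

/-- all supertile corner tiles are equal -/
lemma cornerEq {x y x' y' : ℕ} (hx : x < C.w) (hy : y < C.h) (hx' : x' < C.w)
    (hy' : y' < C.h) : C.ur x y (5 * C.k + 6) = C.ur x' y' (5 * C.k + 6) := by
  refine C.uniq (C.urMem hx hy (by omega)) (C.urMem hx' hy' (by omega)) ?_ ?_
  · rw [C.cornSouth hx hy, C.cornSouth hx' hy', C.rcLastEq hx hy, C.rcLastEq hx' hy']
  · rw [C.urChain hx hy (by omega), C.urChain hx' hy' (by omega),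
      C.urLastEq hx hy, C.urLastEq hx' hy']

/-! the complete-supertile determination -/

lemma inM2 {a r : ℕ} (ha : a + 2 ≤ C.w) (hr : r ≤ 10 * C.k + 14) :
    a * (5 * C.k + 8) + r < QW C.k C.w := by
  have h1 : (a + 2) * (5 * C.k + 8) = a * (5 * C.k + 8) + (10 * C.k + 16) := by ring
  have h2 : (a + 2) * (5 * C.k + 8) ≤ C.w * (5 * C.k + 8) := Nat.mul_le_mul_right _ ha
  have h3 : C.w * (5 * C.k + 8) = (5 * C.k + 8) * C.w := Nat.mul_comm _ _
  rw [hM]; omega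

lemma inN2 {b r : ℕ} (hb : b + 2 ≤ C.h) (hr : r ≤ 10 * C.k + 14) :
    b * (5 * C.k + 8) + r < QH C.k C.h := by
  have h1 : (b + 2) * (5 * C.k + 8) = b * (5 * C.k + 8) + (10 * C.k + 16) := by ring
  have h2 : (b + 2) * (5 * C.k + 8) ≤ C.h * (5 * C.k + 8) := Nat.mul_le_mul_right _ hb
  have h3 : C.h * (5 * C.k + 8) = (5 * C.k + 8) * C.h := Nat.mul_comm _ _
  rw [hN]; omega

lemma memCell {a b i j : ℕ} (ha : a + 1 < C.w) (hb : b + 1 < C.h)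
    (hi : i ≤ 5 * C.k + 7) (hj : j ≤ 5 * C.k + 7) :
    C.f (a * (5 * C.k + 8) + (5 * C.k + 7) + i) (b * (5 * C.k + 8) + (5 * C.k + 7) + j)
      ∈ C.T.tiles := by
  have e1 : a * (5 * C.k + 8) + (5 * C.k + 7) + i = a * (5 * C.k + 8) + (5 * C.k + 7 + i) := by
    omega
  have e2 : b * (5 * C.k + 8) + (5 * C.k + 7) + j = b * (5 * C.k + 8) + (5 * C.k + 7 + j) := by
    omega
  rw [e1, e2]
  exact C.mem (C.inM2 (by omega) (by omega)) (C.inN2 (by omega) (by omega))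

lemma sGlue {a b i : ℕ} (ha : a + 1 < C.w) (hb : b + 1 < C.h) (hi : i ≤ 5 * C.k + 6) :
    (C.f (a * (5 * C.k + 8) + (5 * C.k + 7) + (i + 1)) (b * (5 * C.k + 8) + (5 * C.k + 7))).south
      = (C.ur (a + 1) b i).north := by
  have eX : a * (5 * C.k + 8) + (5 * C.k + 7) + (i + 1) = (a + 1) * (5 * C.k + 8) + i := by
    have h : (a + 1) * (5 * C.k + 8) = a * (5 * C.k + 8) + (5 * C.k + 8) := by ring
    omega
  have eY : b * (5 * C.k + 8) + (5 * C.k + 7) = (b * (5 * C.k + 8) + (5 * C.k + 6)) + 1 := by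
    omega
  rw [eX, eY]
  exact C.slink (C.inM (by omega) (by omega)) (by rw [← eY]; exact C.inN (by omega) (by omega))

lemma wGlue {a b j : ℕ} (ha : a + 1 < C.w) (hb : b + 1 < C.h) (hj : j ≤ 5 * C.k + 6) :
    (C.f (a * (5 * C.k + 8) + (5 * C.k + 7)) (b * (5 * C.k + 8) + (5 * C.k + 7) + (j + 1))).west
      = (C.rc a (b + 1) j).east := by
  have eY : b * (5 * C.k + 8) + (5 * C.k + 7) + (j + 1) = (b + 1) * (5 * C.k + 8) + j := by
    have h : (b + 1) * (5 * C.k + 8) = b * (5 * C.k + 8) + (5 * C.k + 8) := by ring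
    omega
  have eX : a * (5 * C.k + 8) + (5 * C.k + 7) = (a * (5 * C.k + 8) + (5 * C.k + 6)) + 1 := by
    omega
  rw [eX, eY]
  exact C.wlink (by rw [← eX]; exact C.inM (by omega) (by omega))
    (C.inN (by omega) (by omega))

lemma sGlue2 {a b i j : ℕ} (ha : a + 1 < C.w) (hb : b + 1 < C.h)
    (hi : i ≤ 5 * C.k + 7) (hj : j ≤ 5 * C.k + 6) :
    (C.f (a * (5 * C.k + 8) + (5 * C.k + 7) + i)
        (b * (5 * C.k + 8) + (5 * C.k + 7) + (j + 1))).south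
      = (C.f (a * (5 * C.k + 8) + (5 * C.k + 7) + i)
          (b * (5 * C.k + 8) + (5 * C.k + 7) + j)).north := by
  have eY : b * (5 * C.k + 8) + (5 * C.k + 7) + (j + 1)
      = (b * (5 * C.k + 8) + (5 * C.k + 7) + j) + 1 := by omega
  have eX : a * (5 * C.k + 8) + (5 * C.k + 7) + i = a * (5 * C.k + 8) + (5 * C.k + 7 + i) := by
    omega
  have eY2 : b * (5 * C.k + 8) + (5 * C.k + 7) + j = b * (5 * C.k + 8) + (5 * C.k + 7 + j) := by
    omega
  rw [eY]
  refine C.slink ?_ ?_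
  · rw [eX]; exact C.inM2 (by omega) (by omega)
  · rw [eY2]
    have e3 : b * (5 * C.k + 8) + (5 * C.k + 7 + j) + 1
        = b * (5 * C.k + 8) + (5 * C.k + 8 + j) := by omega
    rw [e3]
    exact C.inN2 (by omega) (by omega)

lemma wGlue2 {a b i j : ℕ} (ha : a + 1 < C.w) (hb : b + 1 < C.h)
    (hi : i ≤ 5 * C.k + 6) (hj : j ≤ 5 * C.k + 7) :
    (C.f (a * (5 * C.k + 8) + (5 * C.k + 7) + (i + 1))
        (b * (5 * C.k + 8) + (5 * C.k + 7) + j)).west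
      = (C.f (a * (5 * C.k + 8) + (5 * C.k + 7) + i)
          (b * (5 * C.k + 8) + (5 * C.k + 7) + j)).east := by
  have eX : a * (5 * C.k + 8) + (5 * C.k + 7) + (i + 1)
      = (a * (5 * C.k + 8) + (5 * C.k + 7) + i) + 1 := by omega
  have eX2 : a * (5 * C.k + 8) + (5 * C.k + 7) + i = a * (5 * C.k + 8) + (5 * C.k + 7 + i) := by
    omega
  have eY : b * (5 * C.k + 8) + (5 * C.k + 7) + j = b * (5 * C.k + 8) + (5 * C.k + 7 + j) := by
    omega
  rw [eX]
  refine C.wlink ?_ ?_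
  · rw [eX2]
    have e3 : a * (5 * C.k + 8) + (5 * C.k + 7 + i) + 1
        = a * (5 * C.k + 8) + (5 * C.k + 8 + i) := by omega
    rw [e3]
    exact C.inM2 (by omega) (by omega)
  · rw [eY]; exact C.inN2 (by omega) (by omega)


lemma wGlue1 {a b i : ℕ} (ha : a + 1 < C.w) (hb : b + 1 < C.h) (hi : i ≤ 5 * C.k + 6) :
    (C.f (a * (5 * C.k + 8) + (5 * C.k + 7) + (i + 1)) (b * (5 * C.k + 8) + (5 * C.k + 7))).west
      = (C.f (a * (5 * C.k + 8) + (5 * C.k + 7) + i) (b * (5 * C.k + 8) + (5 * C.k + 7))).east := by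
  have eX : a * (5 * C.k + 8) + (5 * C.k + 7) + (i + 1)
      = (a * (5 * C.k + 8) + (5 * C.k + 7) + i) + 1 := by omega
  have eX2 : a * (5 * C.k + 8) + (5 * C.k + 7) + i = a * (5 * C.k + 8) + (5 * C.k + 7 + i) := by
    omega
  rw [eX]
  refine C.wlink ?_ ?_
  · rw [eX2]
    have e3 : a * (5 * C.k + 8) + (5 * C.k + 7 + i) + 1
        = a * (5 * C.k + 8) + (5 * C.k + 8 + i) := by omega
    rw [e3]
    exact C.inM2 (by omega) (by omega)
  · exact C.inN2 (by omega) (by omega)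

lemma sGlueCol {a b j : ℕ} (ha : a + 1 < C.w) (hb : b + 1 < C.h) (hj : j ≤ 5 * C.k + 6) :
    (C.f (a * (5 * C.k + 8) + (5 * C.k + 7)) (b * (5 * C.k + 8) + (5 * C.k + 7) + (j + 1))).south
      = (C.f (a * (5 * C.k + 8) + (5 * C.k + 7)) (b * (5 * C.k + 8) + (5 * C.k + 7) + j)).north := by
  have eY : b * (5 * C.k + 8) + (5 * C.k + 7) + (j + 1)
      = (b * (5 * C.k + 8) + (5 * C.k + 7) + j) + 1 := by omega
  have eY2 : b * (5 * C.k + 8) + (5 * C.k + 7) + j = b * (5 * C.k + 8) + (5 * C.k + 7 + j) := by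
    omega
  rw [eY]
  refine C.slink ?_ ?_
  · exact C.inM2 (by omega) (by omega)
  · rw [eY2]
    have e3 : b * (5 * C.k + 8) + (5 * C.k + 7 + j) + 1
        = b * (5 * C.k + 8) + (5 * C.k + 8 + j) := by omega
    rw [e3]
    exact C.inN2 (by omega) (by omega)

set_option maxHeartbeats 2000000 in
/-- the main determination lemma: a complete supertile is determined by its `A` tile. -/
lemma superDet {a₁ b₁ a₂ b₂ : ℕ} (ha₁ : a₁ + 1 < C.w) (hb₁ : b₁ + 1 < C.h)
    (ha₂ : a₂ + 1 < C.w) (hb₂ : b₂ + 1 < C.h)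
    (hA : C.f (a₁ * (5 * C.k + 8) + (5 * C.k + 7)) (b₁ * (5 * C.k + 8) + (5 * C.k + 7))
        = C.f (a₂ * (5 * C.k + 8) + (5 * C.k + 7)) (b₂ * (5 * C.k + 8) + (5 * C.k + 7))) :
    ∀ j ≤ 5 * C.k + 7, ∀ i ≤ 5 * C.k + 7,
      C.f (a₁ * (5 * C.k + 8) + (5 * C.k + 7) + i) (b₁ * (5 * C.k + 8) + (5 * C.k + 7) + j)
        = C.f (a₂ * (5 * C.k + 8) + (5 * C.k + 7) + i)
            (b₂ * (5 * C.k + 8) + (5 * C.k + 7) + j) := by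
  intro j
  induction j with
  | zero =>
      intro _ i
      induction i with
      | zero => intro _; simpa using hA
      | succ i ihi =>
          intro hi
          have hprev := ihi (by omega)
          simp only [Nat.add_zero] at hprev ⊢
          refine C.uniq (C.memCell (i := i + 1) (j := 0) ha₁ hb₁ (by omega) (by omega))
            (C.memCell (i := i + 1) (j := 0) ha₂ hb₂ (by omega) (by omega)) ?_ ?_
          · rw [C.sGlue ha₁ hb₁ (by omega), C.sGlue ha₂ hb₂ (by omega)]
            rcases le_or_gt i (5 * C.k + 5) with h5 | h5
            · rw [C.urNorth (by omega) (by omega) h5, C.urNorth (by omega) (by omega) h5]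
            · have hi6 : i = 5 * C.k + 6 := by omega
              subst hi6
              rw [C.cornerEq (x := a₁ + 1) (y := b₁) (x' := a₂ + 1) (y' := b₂)
                (by omega) (by omega) (by omega) (by omega)]
          · rw [C.wGlue1 ha₁ hb₁ (by omega), C.wGlue1 ha₂ hb₂ (by omega), hprev]
  | succ j ihj =>
      intro hj i
      have hrow := ihj (by omega)
      induction i with
      | zero =>
          intro _
          have hrow0 := hrow 0 (by omega)
          simp only [Nat.add_zero] at hrow0 ⊢
          refine C.uniq (C.memCell (i := 0) (j := j + 1) ha₁ hb₁ (by omega) (by omega))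
            (C.memCell (i := 0) (j := j + 1) ha₂ hb₂ (by omega) (by omega)) ?_ ?_
          · rw [C.sGlueCol ha₁ hb₁ (by omega), C.sGlueCol ha₂ hb₂ (by omega), hrow0]
          · rw [C.wGlue ha₁ hb₁ (by omega), C.wGlue ha₂ hb₂ (by omega)]
            rcases le_or_gt j (5 * C.k + 5) with h5 | h5
            · rw [C.rcEast (by omega) (by omega) h5, C.rcEast (by omega) (by omega) h5]
            · have hj6 : j = 5 * C.k + 6 := by omega
              subst hj6
              have hce := C.cornerEq (x := a₁) (y := b₁ + 1) (x' := a₂) (y' := b₂ + 1)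
                (by omega) (by omega) (by omega) (by omega)
              exact congrArg Tile.east hce
      | succ i ihi =>
          intro hi
          have hprev := ihi (by omega)
          refine C.uniq (C.memCell (i := i + 1) (j := j + 1) ha₁ hb₁ (by omega) (by omega))
            (C.memCell (i := i + 1) (j := j + 1) ha₂ hb₂ (by omega) (by omega)) ?_ ?_
          · rw [C.sGlue2 ha₁ hb₁ (by omega) (by omega), C.sGlue2 ha₂ hb₂ (by omega) (by omega),
              hrow (i + 1) (by omega)]
          · rw [C.wGlue2 ha₁ hb₁ (by omega) (by omega), C.wGlue2 ha₂ hb₂ (by omega) (by omega),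
              hprev]

end Ctx
end ControlDev
/-- Control tiles: if a DTAS `Θ` self-assembles `Q` using at most `m_b = 1` black
and `m_g = 2k + 3` gray tile types, then the tile assignment of any complete
supertile in `Q_Θ` (together with its output glues) is fully determined by the
tile type in its position `A`, which is in turn determined by the supertile's
south and west inputs; consequently, two complete supertiles are distinct iff the
tile types in their positions `A` are distinct, iff their inputs differ. -/
theorem control_tile_determines_supertile {G : Type} [DecidableEq G]
    (k w h ℓ : ℕ) (P : ℕ → ℕ → ℕ) (hI : InI k w h P) (hℓ : ℓ = 5 * k + 8)
    (Θ : RTAS BWG G) (hD : DirectedTAS Θ)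
    (hb : countColor Θ BWG.black ≤ 1)
    (hg : countColor Θ BWG.gray ≤ 2 * k + 3)
    (f : ℕ → ℕ → Tile BWG G)
    (hf : IsAssignment Θ (QW k w) (QH k h) f)
    (hcol : ∀ X < QW k w, ∀ Y < QH k h, (f X Y).color = QPat k w h P X Y) :
    ∀ x₁ y₁ x₂ y₂, 1 ≤ x₁ → x₁ < w → 1 ≤ y₁ → y₁ < h →
      1 ≤ x₂ → x₂ < w → 1 ≤ y₂ → y₂ < h →
      ((superOpt ℓ f x₁ y₁ = superOpt ℓ f x₂ y₂) ↔
        f (x₁ * ℓ - 1) (y₁ * ℓ - 1) = f (x₂ * ℓ - 1) (y₂ * ℓ - 1)) ∧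
      ((f (x₁ * ℓ - 1) (y₁ * ℓ - 1) = f (x₂ * ℓ - 1) (y₂ * ℓ - 1)) ↔
        (stS ℓ f x₁ y₁ = stS ℓ f x₂ y₂ ∧ stW ℓ f x₁ y₁ = stW ℓ f x₂ y₂)) := by
  obtain ⟨F, ρ, hwF, hh6, hbij, hPval⟩ := hI
  subst hℓ hwF hh6
  have hP' : ∀ x < widthF F, ∀ y < 6, 1 ≤ P x y ∧ P x y ≤ k := by
    intro x hx y hy
    have hmem : patF F x y ∈ colorsOf (widthF F) 6 (patF F) :=
      Finset.mem_image.2 ⟨(x, y),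
        Finset.mem_product.2 ⟨Finset.mem_range.2 hx, Finset.mem_range.2 hy⟩, rfl⟩
    have h2 := hbij.1 (Finset.mem_coe.2 hmem)
    rw [hPval x hx y hy]
    simpa [Set.mem_Icc] using h2
  have hw1 : 1 ≤ widthF F := by unfold widthF; omega
  let C : Ctx G := ⟨k, widthF F, 6, P, Θ, f, hw1, by omega, hP', hD, hb, hg, hf, hcol⟩
  have hCw : C.w = widthF F := rfl
  have hCh : C.h = 6 := rfl
  have hCk : C.k = k := rfl
  intro x₁ y₁ x₂ y₂ hx₁ hx₁w hy₁ hy₁h hx₂ hx₂w hy₂ hy₂h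
  obtain ⟨a₁, rfl⟩ : ∃ a, x₁ = a + 1 := ⟨x₁ - 1, by omega⟩
  obtain ⟨b₁, rfl⟩ : ∃ b, y₁ = b + 1 := ⟨y₁ - 1, by omega⟩
  obtain ⟨a₂, rfl⟩ : ∃ a, x₂ = a + 1 := ⟨x₂ - 1, by omega⟩
  obtain ⟨b₂, rfl⟩ : ∃ b, y₂ = b + 1 := ⟨y₂ - 1, by omega⟩
  have E : ∀ a : ℕ, (a + 1) * (5 * k + 8) - 1 = a * (5 * k + 8) + (5 * k + 7) := by
    intro a
    have h : (a + 1) * (5 * k + 8) = a * (5 * k + 8) + (5 * k + 8) := by ring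
    omega
  have E2 : ∀ a i : ℕ, (a + 1) * (5 * k + 8) + i - 1 = a * (5 * k + 8) + (5 * k + 7) + i := by
    intro a i
    have h : (a + 1) * (5 * k + 8) = a * (5 * k + 8) + (5 * k + 8) := by ring
    omega
  have hm1 : f ((a₁ + 1) * (5 * k + 8) - 1) ((b₁ + 1) * (5 * k + 8) - 1) ∈ Θ.tiles := by
    rw [E a₁, E b₁]
    exact C.mem (C.inM2 (by omega) (by omega)) (C.inN2 (by omega) (by omega))
  have hm2 : f ((a₂ + 1) * (5 * k + 8) - 1) ((b₂ + 1) * (5 * k + 8) - 1) ∈ Θ.tiles := by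
    rw [E a₂, E b₂]
    exact C.mem (C.inM2 (by omega) (by omega)) (C.inN2 (by omega) (by omega))
  constructor
  · constructor
    · -- superOpt equality gives equality of the A tiles
      intro hS
      have h00 := congrFun (congrFun hS 0) 0
      unfold superOpt at h00
      rw [if_pos ⟨by omega, by omega, Or.inl (by omega), Or.inl (by omega)⟩,
        if_pos ⟨by omega, by omega, Or.inl (by omega), Or.inl (by omega)⟩] at h00
      have h01 := Option.some.inj h00
      simpa using h01
    · -- the A tiles determine the whole supertile
      intro hA
      have hA' : f (a₁ * (5 * k + 8) + (5 * k + 7)) (b₁ * (5 * k + 8) + (5 * k + 7))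
          = f (a₂ * (5 * k + 8) + (5 * k + 7)) (b₂ * (5 * k + 8) + (5 * k + 7)) := by
        rw [← E a₁, ← E b₁, ← E a₂, ← E b₂]
        exact hA
      funext i j
      unfold superOpt
      by_cases hc : i < 5 * k + 8 ∧ j < 5 * k + 8
      · rw [if_pos ⟨hc.1, hc.2, Or.inl (by omega), Or.inl (by omega)⟩,
          if_pos ⟨hc.1, hc.2, Or.inl (by omega), Or.inl (by omega)⟩]
        congr 1
        rw [E2 a₁ i, E2 b₁ j, E2 a₂ i, E2 b₂ j]
        exact C.superDet (by omega) (by omega) (by omega) (by omega) hA' j (by omega)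
          i (by omega)
      · rw [if_neg (by intro hcc; exact hc ⟨hcc.1, hcc.2.1⟩),
          if_neg (by intro hcc; exact hc ⟨hcc.1, hcc.2.1⟩)]
  · constructor
    · intro hA
      exact ⟨congrArg Tile.south hA, congrArg Tile.west hA⟩
    · rintro ⟨hs, hw⟩
      exact C.uniq hm1 hm2 hs hw
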